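/- arXiv:1611.04095 — 2 statements merged into one kernel-verified Lean document; each statement's English description precedes it below -/
import Mathlib

section
/- Let G be an infinite connected graph with maximal degree Δ_G and let p ∈ [0,1). If for every vertex x the expected size of the open cluster C_x in Bernoulli(p) bond percolation is finite, then for every vertex y and every n ≥ 1, (1-p)^{Δ_G} · ∑_{i=0}^{n} inf_{x} P^x(T_x > i) ≤ E[U_n] ≤ (sup_x E[|C_x|]) · ∑_{i=0}^{n} sup_x P^x(T_x > i), where the expectation on U_n is with respect to the product of the simple random walk started at y and percolation. -/
open MeasureTheory
open scoped ENNReal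

namespace PaperUnion

variable {V : Type*}

/-- The subgraph of `G` consisting of the open edges of the percolation
configuration `ω`. -/
def openGraph (G : SimpleGraph V) (ω : Sym2 V → Bool) : SimpleGraph V where
  Adj x y := G.Adj x y ∧ ω s(x, y) = true
  symm := by
    constructor
    rintro x y ⟨h1, h2⟩
    exact ⟨h1.symm, by rwa [Sym2.eq_swap]⟩
  loopless := by constructor; rintro x ⟨h, -⟩; exact G.irrefl h

/-- The open cluster of the vertex `x` in the configuration `ω`. -/
def cluster (G : SimpleGraph V) (ω : Sym2 V → Bool) (x : V) : Set V :=
  {y | (openGraph G ω).Reachable x y}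

/-- `|C_x|`, the number of vertices of the open cluster of `x`. -/
noncomputable def clusterSize (G : SimpleGraph V) (ω : Sym2 V → Bool) (x : V) : ℝ≥0∞ :=
  (cluster G ω x).encard

/-- `μ` is Bernoulli(p) bond percolation on `G`: a probability measure under which the
states of distinct edges are independent and each edge is open with probability `p`. -/
def IsBernoulli (G : SimpleGraph V) (p : ℝ≥0∞) (μ : Measure (Sym2 V → Bool)) : Prop :=
  IsProbabilityMeasure μ ∧
    ∀ F : Finset (Sym2 V), (F : Set (Sym2 V)) ⊆ G.edgeSet →
      ∀ b : Sym2 V → Bool,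
        μ {ω | ∀ e ∈ F, ω e = b e} = ∏ e ∈ F, (if b e then p else 1 - p)

open Classical in
/-- The probability that the simple random walk started at `x` follows the
finite path `s`. -/
noncomputable def pathProb (G : SimpleGraph V) [G.LocallyFinite] (x : V) {n : ℕ}
    (s : Fin (n + 1) → V) : ℝ≥0∞ :=
  (if s 0 = x then 1 else 0) *
    ∏ i : Fin n,
      if G.Adj (s i.castSucc) (s i.succ) then ((G.degree (s i.castSucc) : ℝ≥0∞))⁻¹ else 0

/-- `P^x(E)` for an event `E` depending on the first `n+1` positions of the simple
random walk. -/
noncomputable def walkProb (G : SimpleGraph V) [G.LocallyFinite] (x : V) (n : ℕ)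
    (E : (Fin (n + 1) → V) → Prop) : ℝ≥0∞ :=
  ∑' s : Fin (n + 1) → V, {t : Fin (n + 1) → V | E t}.indicator (fun t => pathProb G x t) s

/-- `P^x(T_A > n)`, where `T_A = inf {m ≥ 1 : S_m ∈ A}`. -/
noncomputable def probAvoid (G : SimpleGraph V) [G.LocallyFinite] (x : V) (A : Set V)
    (n : ℕ) : ℝ≥0∞ :=
  walkProb G x n (fun s => ∀ m : Fin (n + 1), 0 < (m : ℕ) → s m ∉ A)

/-- `P^x(T_A = ∞)`. -/
noncomputable def escapeProb (G : SimpleGraph V) [G.LocallyFinite] (x : V) (A : Set V) : ℝ≥0∞ :=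
  ⨅ n : ℕ, probAvoid G x A n

/-- `P^x(k < T_A < ∞)`. -/
noncomputable def probHitAfter (G : SimpleGraph V) [G.LocallyFinite] (x : V) (A : Set V)
    (k : ℕ) : ℝ≥0∞ :=
  probAvoid G x A k - escapeProb G x A

def IsVertexTransitive (G : SimpleGraph V) : Prop :=
  ∀ x y : V, ∃ φ : G ≃g G, φ x = y

def Transient (G : SimpleGraph V) [G.LocallyFinite] : Prop :=
  ∀ x : V, 0 < escapeProb G x {x}

def Recurrent (G : SimpleGraph V) [G.LocallyFinite] : Prop :=
  ∀ x : V, escapeProb G x {x} = 0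

/-- The trace `{S_0, …, S_n}` of a finite path. -/
def trace [DecidableEq V] {n : ℕ} (s : Fin (n + 1) → V) : Finset V :=
  Finset.image s Finset.univ

/-- `R_n`, the number of vertices visited by the path. -/
def rangeSize [DecidableEq V] {n : ℕ} (s : Fin (n + 1) → V) : ℕ :=
  (trace s).card

/-- The inner boundary `∂R_n` of the trace: the visited vertices having a
neighbour outside the trace. -/
def innerBoundary [DecidableEq V] (G : SimpleGraph V) {n : ℕ} (s : Fin (n + 1) → V) : Set V :=
  {x | x ∈ trace s ∧ ∃ y, G.Adj x y ∧ y ∉ trace s}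

/-- `L_n = |∂R_n|`. -/
noncomputable def boundarySize [DecidableEq V] (G : SimpleGraph V) {n : ℕ}
    (s : Fin (n + 1) → V) : ℕ :=
  (innerBoundary G s).ncard

/-- `E^{P^x}[R_n]`. -/
noncomputable def expRange [DecidableEq V] (G : SimpleGraph V) [G.LocallyFinite] (x : V)
    (n : ℕ) : ℝ≥0∞ :=
  ∑' s : Fin (n + 1) → V, pathProb G x s * (rangeSize s : ℝ≥0∞)

/-- `E^{P^x}[L_n]`. -/
noncomputable def expBoundary [DecidableEq V] (G : SimpleGraph V) [G.LocallyFinite] (x : V)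
    (n : ℕ) : ℝ≥0∞ :=
  ∑' s : Fin (n + 1) → V, pathProb G x s * (boundarySize G s : ℝ≥0∞)

/-- `E[U_n]` where `U_n = |⋃_{i ≤ n} C_{S_i}|`, the expectation being taken with
respect to the product of the walk measure started at `x` and the percolation
measure `μ`. -/
noncomputable def expUnion (G : SimpleGraph V) [G.LocallyFinite]
    (μ : Measure (Sym2 V → Bool)) (x : V) (n : ℕ) : ℝ≥0∞ :=
  ∑' s : Fin (n + 1) → V, pathProb G x s * ∫⁻ ω, (⋃ i, cluster G ω (s i)).encard ∂μ

/-- `c_p = E[|C_o| ⬝ P^o(T_{C_o} = ∞)]`. -/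
noncomputable def cP (G : SimpleGraph V) [G.LocallyFinite] (μ : Measure (Sym2 V → Bool))
    (o : V) : ℝ≥0∞ :=
  ∫⁻ ω, clusterSize G ω o * escapeProb G o (cluster G ω o) ∂μ

/-!
Every open cluster contains its own vertex, and the clusters met by the walk are the clusters of
its distinct visited vertices. Hence `R_n ≤ U_n` pointwise, where `R_n` is the size of the range,
and `E[U_n] ≤ (sup_x E|C_x|) · E[R_n]` by subadditivity of the cardinality; the factor
`(1 - p)^Δ` of the lower bound is at most `1`.

The range counts the last visits, and by the Markov property at time `i` the probability that `i`
is a last visit before time `n` is an average of `P^x(T_x > n - i)`. So `E[R_n]` lies between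
`∑ inf_x P^x(T_x > i)` and `∑ sup_x P^x(T_x > i)`.
-/

open Finset

section RandomWalk

variable (G : SimpleGraph V) [G.LocallyFinite]

-- Classical decidability as in `pathProb`, so that `pathProb_eq_ite_mul_prod` is `rfl`.
open Classical in
noncomputable def stepProb (u v : V) : ℝ≥0∞ :=
  if G.Adj u v then ((G.degree u : ℝ≥0∞))⁻¹ else 0

/-- `E^x[F(S_0, …, S_n)]`. -/
noncomputable def walkExp (x : V) (n : ℕ) (F : (Fin (n + 1) → V) → ℝ≥0∞) : ℝ≥0∞ :=
  ∑' s : Fin (n + 1) → V, pathProb G x s * F s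

open Classical in
lemma pathProb_eq_ite_mul_prod (x : V) {n : ℕ} (s : Fin (n + 1) → V) :
    pathProb G x s =
      (if s 0 = x then 1 else 0) * ∏ i : Fin n, stepProb G (s i.castSucc) (s i.succ) :=
  rfl

lemma pathProb_eq_zero_of_ne {x : V} {n : ℕ} {s : Fin (n + 1) → V} (h : s 0 ≠ x) :
    pathProb G x s = 0 := by
  simp [pathProb, h]

lemma pathProb_snoc (x : V) {n : ℕ} (s : Fin (n + 1) → V) (v : V) :
    pathProb G x (Fin.snoc s v : Fin (n + 2) → V) =
      pathProb G x s * stepProb G (s (Fin.last n)) v := by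
  rw [pathProb_eq_ite_mul_prod, pathProb_eq_ite_mul_prod, Fin.prod_univ_castSucc]
  simp only [Fin.succ_castSucc, Fin.snoc_castSucc, Fin.succ_last, Fin.snoc_last]
  rw [show (0 : Fin (n + 2)) = Fin.castSucc 0 from rfl, Fin.snoc_castSucc, mul_assoc]

lemma tsum_stepProb {u : V} (hu : 0 < G.degree u) : ∑' v, stepProb G u v = 1 := by
  classical
  rw [tsum_eq_sum (s := G.neighborFinset u) fun v hv => by
    rw [stepProb, if_neg (by simpa using hv)]]
  rw [sum_congr rfl fun v hv => by rw [stepProb, if_pos ((G.mem_neighborFinset u v).mp hv)]]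
  rw [sum_const, G.card_neighborFinset_eq_degree, nsmul_eq_mul,
    ENNReal.mul_inv_cancel (by exact_mod_cast hu.ne') (ENNReal.natCast_ne_top _)]

lemma walkExp_zero (x : V) (F : (Fin 1 → V) → ℝ≥0∞) : walkExp G x 0 F = F fun _ => x := by
  rw [walkExp, ← (Equiv.funUnique (Fin 1) V).symm.tsum_eq,
    tsum_eq_single x fun v hv => by rw [pathProb_eq_zero_of_ne G hv, zero_mul]]
  change pathProb G x (fun _ => x) * F (fun _ => x) = _
  simp [pathProb]

lemma walkExp_succ (x : V) (n : ℕ) (F : (Fin (n + 2) → V) → ℝ≥0∞) :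
    walkExp G x (n + 1) F =
      walkExp G x n fun s => ∑' v, stepProb G (s (Fin.last n)) v * F (Fin.snoc s v) := by
  rw [walkExp, ← (Fin.snocEquiv fun _ => V).tsum_eq, ENNReal.tsum_prod', ENNReal.tsum_comm]
  refine tsum_congr fun s => ?_
  rw [← ENNReal.tsum_mul_left]
  exact tsum_congr fun v => by rw [← mul_assoc, ← pathProb_snoc]; rfl

lemma walkExp_mono {x : V} {n : ℕ} {F F' : (Fin (n + 1) → V) → ℝ≥0∞}
    (h : ∀ s, F s ≤ F' s) : walkExp G x n F ≤ walkExp G x n F' :=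
  ENNReal.tsum_le_tsum fun s => mul_le_mul_right (h s) _

lemma walkExp_finsetSum {ι : Type*} (t : Finset ι) (x : V) (n : ℕ)
    (F : ι → (Fin (n + 1) → V) → ℝ≥0∞) :
    walkExp G x n (fun s => ∑ i ∈ t, F i s) = ∑ i ∈ t, walkExp G x n (F i) := by
  simp only [walkExp, mul_sum]
  exact Summable.tsum_finsetSum fun _ _ => ENNReal.summable

variable {G}

lemma walkExp_const (hdeg : ∀ x, 0 < G.degree x) (x : V) (n : ℕ) (c : ℝ≥0∞) :
    walkExp G x n (fun _ => c) = c := by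
  induction n with
  | zero => exact walkExp_zero G x _
  | succ n ih =>
    simp only [walkExp_succ, ENNReal.tsum_mul_right, tsum_stepProb G (hdeg _), one_mul, ih]

lemma iInf_le_walkExp_comp_last (hdeg : ∀ x, 0 < G.degree x) (g : V → ℝ≥0∞) (y : V)
    (n : ℕ) : ⨅ x, g x ≤ walkExp G y n fun a => g (a (Fin.last n)) :=
  (walkExp_const hdeg y n _).symm.le.trans (walkExp_mono G fun _ => iInf_le g _)

lemma walkExp_comp_last_le_iSup (hdeg : ∀ x, 0 < G.degree x) (g : V → ℝ≥0∞) (y : V)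
    (n : ℕ) : (walkExp G y n fun a => g (a (Fin.last n))) ≤ ⨆ x, g x :=
  (walkExp_mono G fun _ => le_iSup g _).trans (walkExp_const hdeg y n _).le

variable (G)

/-- The Markov property at time `i`. -/
lemma walkExp_comp_natAdd (x : V) (i m : ℕ) (F : (Fin (m + 1) → V) → ℝ≥0∞) :
    walkExp G x (i + m) (fun s => F (s ∘ Fin.natAdd i)) =
      walkExp G x i fun a => walkExp G (a (Fin.last i)) m F := by
  induction m with
  | zero =>
    simp only [walkExp_zero]
    refine congrArg (walkExp G x i) (funext fun s => congrArg F (funext fun j => ?_))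
    rw [Fin.fin_one_eq_zero j]
    rfl
  | succ m ih =>
    simp only [walkExp_succ, ← ih]
    change walkExp G x (i + m + 1) _ = _
    rw [walkExp_succ]
    refine congrArg (walkExp G x (i + m)) (funext fun s => tsum_congr fun v => ?_)
    rw [← Fin.snoc_comp_natAdd]
    rfl

end RandomWalk

section LastVisit

def IsLastVisit {n : ℕ} (s : Fin (n + 1) → V) (i : Fin (n + 1)) : Prop :=
  ∀ j, i < j → s j ≠ s i

lemma isLastVisit_iff_comp_natAdd {i m : ℕ} (s : Fin (i + m + 1) → V) :
    IsLastVisit s ⟨i, by omega⟩ ↔ IsLastVisit (s ∘ Fin.natAdd i) 0 := by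
  change IsLastVisit s (Fin.natAdd i (0 : Fin (m + 1))) ↔ _
  constructor
  · intro h k hk
    exact h _ ((Fin.natAdd_lt_natAdd_iff i).mpr hk)
  · intro h j hj
    have hij : i < (j : ℕ) := by simpa [Fin.lt_def] using hj
    obtain ⟨k, rfl⟩ : ∃ k : Fin (m + 1), j = Fin.natAdd i k :=
      ⟨⟨j - i, by omega⟩, Fin.ext (by simp only [Fin.val_natAdd]; omega)⟩
    exact h k ((Fin.natAdd_lt_natAdd_iff i).mp hj)

variable [DecidableEq V]

instance {n : ℕ} (s : Fin (n + 1) → V) (i : Fin (n + 1)) : Decidable (IsLastVisit s i) := by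
  unfold IsLastVisit; infer_instance

lemma rangeSize_eq_card_isLastVisit {n : ℕ} (s : Fin (n + 1) → V) :
    rangeSize s = #{i | IsLastVisit s i} := by
  have himage : trace s = image s {i | IsLastVisit s i} := by
    refine le_antisymm (fun v hv => ?_) (image_subset_image (subset_univ _))
    obtain ⟨i, -, rfl⟩ := mem_image.mp hv
    obtain ⟨j, hj, hmax⟩ := exists_max_image {j | s j = s i} id ⟨i, by simp⟩
    rw [mem_filter] at hj
    refine mem_image.mpr ⟨j, mem_filter.mpr ⟨mem_univ _, fun k hjk hk => ?_⟩, hj.2⟩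
    exact (hmax k (by simp [hk, hj.2])).not_gt hjk
  rw [rangeSize, himage, card_image_of_injOn]
  intro i hi j hj hij
  simp only [coe_filter, mem_univ, true_and, Set.mem_ofPred_eq] at hi hj
  rcases lt_trichotomy i j with h | h | h
  · exact absurd hij.symm (hi j h)
  · exact h
  · exact absurd hij (hj i h)

end LastVisit

lemma sum_range_succ_eq_sum_fin_sub {M : Type*} [AddCommMonoid M] (f : ℕ → M) (n : ℕ) :
    ∑ k ∈ range (n + 1), f k = ∑ i : Fin (n + 1), f (n - i) := by
  rw [Fin.sum_univ_eq_sum_range (fun i => f (n - i)), ← sum_range_reflect]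
  simp

section ExpectedRange

variable [DecidableEq V] (G : SimpleGraph V) [G.LocallyFinite]

lemma probAvoid_singleton_eq_walkExp (x : V) (m : ℕ) :
    probAvoid G x {x} m = walkExp G x m fun b => if IsLastVisit b 0 then 1 else 0 := by
  refine tsum_congr fun b => ?_
  by_cases hb : b 0 = x
  · subst hb
    rw [Set.indicator_apply, mul_ite, mul_one, mul_zero]
    exact if_congr (forall_congr' fun j => by simp [Fin.pos_iff_ne_zero]) rfl rfl
  · simp [pathProb_eq_zero_of_ne G hb]

lemma walkExp_isLastVisit (y : V) {n i : ℕ} (hi : i ≤ n) :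
    walkExp G y n (fun s => if IsLastVisit s ⟨i, by omega⟩ then 1 else 0) =
      walkExp G y i fun a => probAvoid G (a (Fin.last i)) {a (Fin.last i)} (n - i) := by
  obtain ⟨m, rfl⟩ := Nat.exists_eq_add_of_le hi
  simp only [isLastVisit_iff_comp_natAdd, Nat.add_sub_cancel_left, probAvoid_singleton_eq_walkExp]
  exact walkExp_comp_natAdd G y i m fun b => if IsLastVisit b 0 then 1 else 0

lemma expRange_eq_sum_walkExp_probAvoid (y : V) (n : ℕ) :
    expRange G y n = ∑ i : Fin (n + 1),
      walkExp G y i fun a => probAvoid G (a (Fin.last i)) {a (Fin.last i)} (n - i) := by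
  rw [sum_congr rfl fun i _ => (walkExp_isLastVisit G y (Fin.is_le i)).symm]
  simp only [Fin.eta]
  rw [← walkExp_finsetSum]
  refine tsum_congr fun s => ?_
  rw [rangeSize_eq_card_isLastVisit, card_filter]
  push_cast
  rfl

variable {G}

theorem sum_iInf_probAvoid_le_expRange (hdeg : ∀ x, 0 < G.degree x) (y : V) (n : ℕ) :
    ∑ k ∈ range (n + 1), ⨅ x, probAvoid G x {x} k ≤ expRange G y n := by
  rw [expRange_eq_sum_walkExp_probAvoid, sum_range_succ_eq_sum_fin_sub]
  exact sum_le_sum fun i _ => iInf_le_walkExp_comp_last hdeg (fun x => probAvoid G x {x} _) y i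

theorem expRange_le_sum_iSup_probAvoid (hdeg : ∀ x, 0 < G.degree x) (y : V) (n : ℕ) :
    expRange G y n ≤ ∑ k ∈ range (n + 1), ⨆ x, probAvoid G x {x} k := by
  rw [expRange_eq_sum_walkExp_probAvoid, sum_range_succ_eq_sum_fin_sub]
  exact sum_le_sum fun i _ => walkExp_comp_last_le_iSup hdeg (fun x => probAvoid G x {x} _) y i

end ExpectedRange

section Clusters

variable (G : SimpleGraph V)

theorem countable_of_connected [G.LocallyFinite] (hconn : G.Connected) : Countable V := by
  obtain ⟨y₀⟩ := hconn.nonempty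
  have hfin : ∀ n, {x | ∃ w : G.Walk x y₀, w.length = n}.Finite := by
    intro n
    induction n with
    | zero =>
      exact (Set.finite_singleton y₀).subset fun x ⟨w, hw⟩ => w.eq_of_length_eq_zero hw
    | succ n ih =>
      refine (ih.biUnion fun v _ => (G.neighborSet v).toFinite).subset ?_
      rintro x ⟨w, hw⟩
      cases w with
      | nil => simp at hw
      | cons h w' => exact Set.mem_biUnion ⟨w', by simpa using hw⟩ h.symm
  refine Set.countable_univ_iff.mp
    ((Set.countable_iUnion fun n => (hfin n).countable).mono fun x _ => ?_)
  obtain ⟨w⟩ := hconn.preconnected x y₀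
  exact Set.mem_iUnion.mpr ⟨w.length, w, rfl⟩

lemma countable_walk [G.LocallyFinite] (x z : V) : Countable (G.Walk x z) := by
  classical
  have huniv : (Set.univ : Set (G.Walk x z)) = ⋃ n, {w | w.length = n} := by ext; simp
  exact Set.countable_univ_iff.mp
    (huniv ▸ Set.countable_iUnion fun n => (Set.toFinite _).countable)

lemma mem_edgeSet_openGraph {ω : Sym2 V → Bool} {e : Sym2 V} :
    e ∈ (openGraph G ω).edgeSet ↔ e ∈ G.edgeSet ∧ ω e = true := by
  induction e using Sym2.ind
  rfl

lemma openGraph_le (ω : Sym2 V → Bool) : openGraph G ω ≤ G := fun _ _ h => h.1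

lemma reachable_openGraph_iff {ω : Sym2 V → Bool} {x z : V} :
    (openGraph G ω).Reachable x z ↔ ∃ w : G.Walk x z, ∀ e ∈ w.edges, ω e = true := by
  constructor
  · rintro ⟨w⟩
    refine ⟨w.mapLe (openGraph_le G ω), fun e he => ?_⟩
    rw [SimpleGraph.Walk.edges_mapLe_eq_edges] at he
    exact ((mem_edgeSet_openGraph G).mp (w.edges_subset_edgeSet he)).2
  · rintro ⟨w, hw⟩
    exact ⟨w.transfer _ fun e he =>
      (mem_edgeSet_openGraph G).mpr ⟨w.edges_subset_edgeSet he, hw e he⟩⟩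

lemma measurableSet_reachable_openGraph [G.LocallyFinite] (x z : V) :
    MeasurableSet {ω : Sym2 V → Bool | (openGraph G ω).Reachable x z} := by
  have := countable_walk G x z
  simp_rw [reachable_openGraph_iff, Set.ofPred_exists]
  refine .iUnion fun w => ?_
  have h : {ω : Sym2 V → Bool | ∀ e ∈ w.edges, ω e = true} =
      ⋂ e ∈ {e | e ∈ w.edges}, (fun ω => ω e) ⁻¹' {true} := by
    ext; simp
  exact h ▸ .biInter w.edges.finite_toSet.countable fun e _ =>
    measurable_pi_apply e (measurableSet_singleton true)

lemma measurable_clusterSize [G.LocallyFinite] [Countable V] (x : V) :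
    Measurable fun ω => clusterSize G ω x := by
  have h : ∀ ω, clusterSize G ω x =
      ∑' z, {ω | (openGraph G ω).Reachable x z}.indicator 1 ω := fun ω => by
    rw [clusterSize, ← ENNReal.tsum_set_one, _root_.tsum_subtype _ fun _ => 1]
    rfl
  simp_rw [h]
  exact .tsum fun z => measurable_one.indicator (measurableSet_reachable_openGraph G x z)

end Clusters

section UnionOfClusters

variable [DecidableEq V] (G : SimpleGraph V)

lemma rangeSize_le_encard_iUnion_cluster (ω : Sym2 V → Bool) {n : ℕ} (s : Fin (n + 1) → V) :
    (rangeSize s : ℝ≥0∞) ≤ (⋃ i, cluster G ω (s i)).encard := by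
  rw [← ENat.toENNReal_coe, ENat.toENNReal_le, rangeSize, ← Set.encard_coe_eq_coe_finsetCard]
  refine Set.encard_le_encard fun v hv => ?_
  obtain ⟨i, -, rfl⟩ := mem_image.mp hv
  exact Set.mem_iUnion.mpr ⟨i, SimpleGraph.Reachable.refl _⟩

lemma encard_iUnion_cluster_le (ω : Sym2 V → Bool) {n : ℕ} (s : Fin (n + 1) → V) :
    ((⋃ i, cluster G ω (s i)).encard : ℝ≥0∞) ≤
      ∑ v ∈ trace s, clusterSize G ω v := by
  have h : ⋃ i, cluster G ω (s i) = ⋃ v ∈ trace s, cluster G ω v := by simp [trace]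
  simp only [h, clusterSize, ← ENat.toENNRealRingHom_apply, ← map_sum]
  exact ENat.toENNReal_le.mpr ((trace s).set_encard_biUnion_le _)

variable [G.LocallyFinite]

theorem expRange_le_expUnion (μ : Measure (Sym2 V → Bool)) [IsProbabilityMeasure μ] (y : V)
    (n : ℕ) : expRange G y n ≤ expUnion G μ y n := by
  refine ENNReal.tsum_le_tsum fun s => mul_le_mul_right ?_ _
  calc (rangeSize s : ℝ≥0∞) = ∫⁻ _, (rangeSize s : ℝ≥0∞) ∂μ := by simp
    _ ≤ _ := lintegral_mono fun ω => rangeSize_le_encard_iUnion_cluster G ω s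

theorem expUnion_le_mul_expRange [Countable V] (μ : Measure (Sym2 V → Bool)) (y : V) (n : ℕ) :
    expUnion G μ y n ≤ (⨆ x, ∫⁻ ω, clusterSize G ω x ∂μ) * expRange G y n := by
  rw [expUnion, expRange, ← ENNReal.tsum_mul_left]
  refine ENNReal.tsum_le_tsum fun s => ?_
  rw [mul_left_comm]
  refine mul_le_mul_right ?_ _
  calc ∫⁻ ω, ((⋃ i, cluster G ω (s i)).encard : ℝ≥0∞) ∂μ
      ≤ ∫⁻ ω, ∑ v ∈ trace s, clusterSize G ω v ∂μ :=
        lintegral_mono fun ω => encard_iUnion_cluster_le G ω s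
    _ = ∑ v ∈ trace s, ∫⁻ ω, clusterSize G ω v ∂μ :=
        lintegral_finsetSum _ fun v _ => measurable_clusterSize G v
    _ ≤ ∑ _ ∈ trace s, ⨆ x, ∫⁻ ω, clusterSize G ω x ∂μ :=
        sum_le_sum fun v _ => le_iSup (fun x => ∫⁻ ω, clusterSize G ω x ∂μ) v
    _ = _ := by rw [sum_const, nsmul_eq_mul, mul_comm, rangeSize]

end UnionOfClusters

theorem statement_1_general {V : Type*} (G : SimpleGraph V) [G.LocallyFinite]
    (hV : Infinite V) (hconn : G.Connected)
    (Δ : ℕ) (p : ℝ≥0∞)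
    (μ : Measure (Sym2 V → Bool)) (hμ : IsBernoulli G p μ)
    (y : V) (n : ℕ) :
    (1 - p) ^ Δ * ∑ i ∈ Finset.range (n + 1), ⨅ x : V, probAvoid G x {x} i
        ≤ expUnion G μ y n ∧
      expUnion G μ y n ≤
        (⨆ x : V, ∫⁻ ω, clusterSize G ω x ∂μ) *
          ∑ i ∈ Finset.range (n + 1), ⨆ x : V, probAvoid G x {x} i := by
  classical
  have : IsProbabilityMeasure μ := hμ.1
  have : Countable V := countable_of_connected G hconn
  have hdeg : ∀ x, 0 < G.degree x := fun x => hconn.preconnected.degree_pos_of_nontrivial x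
  constructor
  · calc (1 - p) ^ Δ * ∑ i ∈ Finset.range (n + 1), ⨅ x : V, probAvoid G x {x} i
        ≤ ∑ i ∈ Finset.range (n + 1), ⨅ x : V, probAvoid G x {x} i :=
          mul_le_of_le_one_left' (pow_le_one₀ zero_le tsub_le_self)
      _ ≤ expRange G y n := sum_iInf_probAvoid_le_expRange hdeg y n
      _ ≤ expUnion G μ y n := expRange_le_expUnion G μ y n
  · exact (expUnion_le_mul_expRange G μ y n).trans
      (mul_le_mul_right (expRange_le_sum_iSup_probAvoid hdeg y n) _)

/-- Proposition "Growth of mean": bounds on `E[U_n]`. -/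
theorem statement_1 {V : Type*} [DecidableEq V] (G : SimpleGraph V) [G.LocallyFinite]
    (hV : Infinite V) (hconn : G.Connected)
    (Δ : ℕ) (hΔ : ∀ x : V, G.degree x ≤ Δ) (hΔ' : ∃ x : V, G.degree x = Δ)
    (p : ℝ≥0∞) (hp : p < 1)
    (μ : Measure (Sym2 V → Bool)) (hμ : IsBernoulli G p μ)
    (hsub : ∀ x : V, ∫⁻ ω, clusterSize G ω x ∂μ < ⊤)
    (y : V) (n : ℕ) (hn : 1 ≤ n) :
    (1 - p) ^ Δ * ∑ i ∈ Finset.range (n + 1), ⨅ x : V, probAvoid G x {x} i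
        ≤ expUnion G μ y n ∧
      expUnion G μ y n ≤
        (⨆ x : V, ∫⁻ ω, clusterSize G ω x ∂μ) *
          ∑ i ∈ Finset.range (n + 1), ⨆ x : V, probAvoid G x {x} i :=
  statement_1_general G hV hconn Δ p μ hμ y n

end PaperUnion
end

section
/- Let G' be a finite modification of a graph G (there exist finite sets D ⊂ G, D' ⊂ G' and a graph isomorphism φ: G∖D → G'∖D'). If cluster sizes in Bernoulli(p) percolation on G decay exponentially, then cluster sizes on G' decay exponentially: there exist C, c > 0 with P_p^{G'}(|C_x| > n) ≤ C e^{−cn} for all vertices x of G' and all n ≥ 1. -/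
open MeasureTheory
open scoped ENNReal

namespace PaperUnion

variable {V : Type*}

/-- `G'` is a finite modification of `G`. -/
def FiniteModification {V V' : Type*} (G : SimpleGraph V) (G' : SimpleGraph V') : Prop :=
  ∃ (D : Set V) (D' : Set V'), D.Finite ∧ D'.Finite ∧
    Nonempty ((G.induce Dᶜ) ≃g (G'.induce D'ᶜ))


section Aux18

section Cyl

variable {ι : Type*}

def bcyl (F : Finset ι) (c : ι → Bool) : Set (ι → Bool) := {η | ∀ e ∈ F, η e = c e}

lemma measurableSet_bcyl (F : Finset ι) (c : ι → Bool) : MeasurableSet (bcyl F c) := by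
  have h : bcyl F c = ⋂ e ∈ F, (fun η : ι → Bool => η e) ⁻¹' {c e} := by
    ext η; simp [bcyl]
  rw [h]
  exact MeasurableSet.biInter F.countable_toSet fun e _ =>
    measurable_pi_apply e (measurableSet_singleton (c e))

lemma pi_eq_generateFrom_bcyl :
    (MeasurableSpace.pi : MeasurableSpace (ι → Bool)) =
      MeasurableSpace.generateFrom {S | ∃ F c, S = bcyl F c} := by
  refine le_antisymm ?_ (MeasurableSpace.generateFrom_le ?_)
  · have hh : (MeasurableSpace.pi : MeasurableSpace (ι → Bool)) =
        ⨆ e : ι, MeasurableSpace.comap (fun η : ι → Bool => η e) inferInstance := rfl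
    rw [hh]
    refine iSup_le fun e => ?_
    rw [MeasurableSpace.comap_le_iff_le_map]
    intro s _
    have h : (fun η : ι → Bool => η e) ⁻¹' s = ⋃ b ∈ s, bcyl {e} (fun _ => b) := by
      ext η
      simp only [Set.mem_preimage, Set.mem_iUnion, bcyl, Finset.mem_singleton, Set.mem_setOf_eq]
      constructor
      · intro hm; exact ⟨η e, hm, fun e' he' => by subst he'; rfl⟩
      · rintro ⟨b, hb, hbe⟩; have := hbe e rfl; rw [this]; exact hb
    show MeasurableSet[MeasurableSpace.generateFrom _] ((fun η : ι → Bool => η e) ⁻¹' s)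
    rw [h]
    exact MeasurableSet.biUnion s.to_countable fun b _ =>
      MeasurableSpace.measurableSet_generateFrom ⟨{e}, fun _ => b, rfl⟩
  · rintro S ⟨F, c, rfl⟩; exact measurableSet_bcyl F c

lemma isPiSystem_bcyl : IsPiSystem {S : Set (ι → Bool) | ∃ F c, S = bcyl F c} := by
  rintro _ ⟨F₁, c₁, rfl⟩ _ ⟨F₂, c₂, rfl⟩ hne
  classical
  obtain ⟨η₀, h₁, h₂⟩ := hne
  refine ⟨F₁ ∪ F₂, fun e => if e ∈ F₁ then c₁ e else c₂ e, ?_⟩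
  ext η
  simp only [Set.mem_inter_iff, bcyl, Set.mem_setOf_eq, Finset.mem_union]
  constructor
  · rintro ⟨g₁, g₂⟩ e he
    rcases he with h | h
    · rw [if_pos h]; exact g₁ e h
    · by_cases hf : e ∈ F₁
      · rw [if_pos hf]; exact g₁ e hf
      · rw [if_neg hf]; exact g₂ e h
  · intro hg
    constructor
    · intro e he
      have := hg e (Or.inl he); rwa [if_pos he] at this
    · intro e he
      by_cases hf : e ∈ F₁
      · have hc : c₁ e = c₂ e := (h₁ e hf).symm.trans (h₂ e he)
        have := hg e (Or.inl hf); rw [if_pos hf] at this; exact this.trans hc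
      · have := hg e (Or.inr he); rwa [if_neg hf] at this

lemma measure_ext_bcyl {μ ν : Measure (ι → Bool)} [IsFiniteMeasure μ] [IsFiniteMeasure ν]
    (h : ∀ F c, μ (bcyl F c) = ν (bcyl F c)) : μ = ν := by
  refine ext_of_generate_finite _ pi_eq_generateFrom_bcyl isPiSystem_bcyl ?_ ?_
  · rintro _ ⟨F, c, rfl⟩; exact h F c
  · have h0 := h ∅ fun _ => true
    simpa [bcyl] using h0

end Cyl

section Bern

variable {X Y : Type*} {Gx : SimpleGraph X} {Gy : SimpleGraph Y} {p : ℝ≥0∞}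

lemma IsBernoulli.cyl_comp_open {μ : Measure (Sym2 X → Bool)} (hμ : IsBernoulli Gx p μ)
    {ι : Type*} (F : Finset ι) (ρ : ι → Sym2 X) (hinj : Set.InjOn ρ F)
    (hrange : ∀ i ∈ F, ρ i ∈ Gx.edgeSet) (c : ι → Bool)
    (Of : Finset (Sym2 X)) (hOsub : (Of : Set (Sym2 X)) ⊆ Gx.edgeSet)
    (hdisj : ∀ i ∈ F, ρ i ∉ Of) :
    μ ({ω | ∀ i ∈ F, ω (ρ i) = c i} ∩ {ω | ∀ e ∈ Of, ω e = true}) =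
      (∏ i ∈ F, (if c i then p else 1 - p)) * p ^ Of.card := by
  classical
  set cc : Sym2 X → Bool := fun e => if h : ∃ i ∈ F, ρ i = e then c h.choose else true with hcdef
  have hcc : ∀ i ∈ F, cc (ρ i) = c i := by
    intro i hi
    have hex : ∃ j ∈ F, ρ j = ρ i := ⟨i, hi, rfl⟩
    have h1 := hex.choose_spec
    have h2 : hex.choose = i := hinj h1.1 hi h1.2
    simp only [hcdef, dif_pos hex]
    rw [h2]
  set bb : Sym2 X → Bool := fun e => if e ∈ Of then true else cc e with hbdef
  have hb1 : ∀ i ∈ F, bb (ρ i) = c i := by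
    intro i hi
    simp only [hbdef, if_neg (hdisj i hi)]
    exact hcc i hi
  have hb2 : ∀ e ∈ Of, bb e = true := fun e he => by simp only [hbdef, if_pos he]
  have hdisj' : Disjoint (F.image ρ) Of := by
    rw [Finset.disjoint_left]
    rintro e he
    obtain ⟨i, hi, rfl⟩ := Finset.mem_image.1 he
    exact hdisj i hi
  have hset : {ω : Sym2 X → Bool | ∀ i ∈ F, ω (ρ i) = c i} ∩ {ω | ∀ e ∈ Of, ω e = true} =
      {ω | ∀ e ∈ F.image ρ ∪ Of, ω e = bb e} := by
    ext ω
    simp only [Set.mem_inter_iff, Set.mem_setOf_eq, Finset.mem_union]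
    constructor
    · rintro ⟨h1, h2⟩ e he
      rcases he with he | he
      · obtain ⟨i, hi, rfl⟩ := Finset.mem_image.1 he
        rw [hb1 i hi]; exact h1 i hi
      · rw [hb2 e he]; exact h2 e he
    · intro h
      constructor
      · intro i hi
        have := h (ρ i) (Or.inl (Finset.mem_image_of_mem ρ hi))
        rwa [hb1 i hi] at this
      · intro e he
        have := h e (Or.inr he)
        rwa [hb2 e he] at this
  rw [hset, hμ.2 _ ?_ bb, Finset.prod_union hdisj', Finset.prod_image ?_]
  · congr 1
    · exact Finset.prod_congr rfl fun i hi => by rw [hb1 i hi]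
    · rw [Finset.prod_congr rfl fun e he => ?_, Finset.prod_const]
      rw [hb2 e he]
      simp
  · intro a ha b hb hab
    exact hinj (Finset.mem_coe.2 ha) (Finset.mem_coe.2 hb) hab
  · intro e he
    rcases Finset.mem_union.1 he with he | he
    · obtain ⟨i, hi, rfl⟩ := Finset.mem_image.1 he
      exact hrange i hi
    · exact hOsub he

lemma IsBernoulli.cyl_comp {μ : Measure (Sym2 X → Bool)} (hμ : IsBernoulli Gx p μ)
    {ι : Type*} (F : Finset ι) (ρ : ι → Sym2 X) (hinj : Set.InjOn ρ F)
    (hrange : ∀ i ∈ F, ρ i ∈ Gx.edgeSet) (c : ι → Bool) :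
    μ {ω | ∀ i ∈ F, ω (ρ i) = c i} = ∏ i ∈ F, (if c i then p else 1 - p) := by
  have h := hμ.cyl_comp_open F ρ hinj hrange c ∅ (by simp) (by simp)
  simpa using h

lemma bern_map_eq {μx : Measure (Sym2 X → Bool)} {μy : Measure (Sym2 Y → Bool)}
    (hx : IsBernoulli Gx p μx) (hy : IsBernoulli Gy p μy) {ι : Type*}
    (ρx : ι → Sym2 X) (ρy : ι → Sym2 Y)
    (hix : Function.Injective ρx) (hiy : Function.Injective ρy)
    (hrx : ∀ i, ρx i ∈ Gx.edgeSet) (hry : ∀ i, ρy i ∈ Gy.edgeSet) :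
    Measure.map (fun ω (i : ι) => ω (ρx i)) μx = Measure.map (fun ω (i : ι) => ω (ρy i)) μy := by
  haveI := hx.1; haveI := hy.1
  have hmx : Measurable fun (ω : Sym2 X → Bool) (i : ι) => ω (ρx i) :=
    measurable_pi_iff.2 fun i => measurable_pi_apply _
  have hmy : Measurable fun (ω : Sym2 Y → Bool) (i : ι) => ω (ρy i) :=
    measurable_pi_iff.2 fun i => measurable_pi_apply _
  haveI := Measure.isProbabilityMeasure_map (μ := μx) hmx.aemeasurable
  haveI := Measure.isProbabilityMeasure_map (μ := μy) hmy.aemeasurable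
  refine measure_ext_bcyl fun F c => ?_
  rw [Measure.map_apply hmx (measurableSet_bcyl F c),
    Measure.map_apply hmy (measurableSet_bcyl F c)]
  have e1 : (fun ω (i : ι) => ω (ρx i)) ⁻¹' bcyl F c = {ω : Sym2 X → Bool | ∀ i ∈ F, ω (ρx i) = c i} := rfl
  have e2 : (fun ω (i : ι) => ω (ρy i)) ⁻¹' bcyl F c = {ω : Sym2 Y → Bool | ∀ i ∈ F, ω (ρy i) = c i} := rfl
  rw [e1, e2, hx.cyl_comp F ρx hix.injOn (fun i _ => hrx i) c,
    hy.cyl_comp F ρy hiy.injOn (fun i _ => hry i) c]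

lemma bern_cond_open (hp : p ≤ 1) {μ : Measure (Sym2 X → Bool)} (hμ : IsBernoulli Gx p μ)
    {ι : Type*} (ρ : ι → Sym2 X) (hinj : Function.Injective ρ)
    (hrange : ∀ i, ρ i ∈ Gx.edgeSet)
    (Of : Finset (Sym2 X)) (hOsub : (Of : Set (Sym2 X)) ⊆ Gx.edgeSet)
    (hdisj : ∀ i, ρ i ∉ Of) {S : Set (ι → Bool)} (hS : MeasurableSet S) :
    μ ((fun ω (i : ι) => ω (ρ i)) ⁻¹' S ∩ {ω | ∀ e ∈ Of, ω e = true}) =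
      μ ((fun ω (i : ι) => ω (ρ i)) ⁻¹' S) * p ^ Of.card := by
  classical
  haveI := hμ.1
  set g : (Sym2 X → Bool) → ι → Bool := fun ω i => ω (ρ i) with hg
  have hgm : Measurable g := measurable_pi_iff.2 fun i => measurable_pi_apply _
  set O : Set (Sym2 X → Bool) := {ω | ∀ e ∈ Of, ω e = true} with hO
  have key : Measure.map g (μ.restrict O) = (p ^ Of.card) • Measure.map g μ := by
    haveI h1 : IsFiniteMeasure (Measure.map g (μ.restrict O)) := by
      constructor
      rw [Measure.map_apply hgm MeasurableSet.univ]
      exact lt_of_le_of_lt (le_trans (measure_mono (Set.subset_univ _))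
        (Measure.restrict_apply_le _ _)) (measure_lt_top μ Set.univ)
    haveI h2 : IsFiniteMeasure ((p ^ Of.card) • Measure.map g μ) := by
      constructor
      rw [Measure.smul_apply, Measure.map_apply hgm MeasurableSet.univ, smul_eq_mul]
      exact ENNReal.mul_lt_top (lt_of_le_of_lt (pow_le_one' hp _) ENNReal.one_lt_top)
        (measure_lt_top _ _)
    refine measure_ext_bcyl fun F c => ?_
    rw [Measure.map_apply hgm (measurableSet_bcyl F c),
      Measure.restrict_apply (hgm (measurableSet_bcyl F c))]
    have e1 : g ⁻¹' bcyl F c ∩ O =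
        {ω : Sym2 X → Bool | ∀ i ∈ F, ω (ρ i) = c i} ∩ {ω : Sym2 X → Bool | ∀ e ∈ Of, ω e = true} := rfl
    rw [e1, hμ.cyl_comp_open F ρ hinj.injOn (fun i _ => hrange i) c Of hOsub
      (fun i _ => hdisj i)]
    rw [Measure.smul_apply, Measure.map_apply hgm (measurableSet_bcyl F c), smul_eq_mul]
    have e2 : g ⁻¹' bcyl F c = {ω : Sym2 X → Bool | ∀ i ∈ F, ω (ρ i) = c i} := rfl
    rw [e2, hμ.cyl_comp F ρ hinj.injOn (fun i _ => hrange i) c]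
    ring
  have hfin : μ (g ⁻¹' S ∩ O) = Measure.map g (μ.restrict O) S := by
    rw [Measure.map_apply hgm hS, Measure.restrict_apply (hgm hS)]
  rw [hfin, key, Measure.smul_apply, Measure.map_apply hgm hS, smul_eq_mul]
  ring

end Bern
section Constr

variable {X Y : Type*} {Gx : SimpleGraph X} {Gy : SimpleGraph Y} {p : ℝ≥0∞}

lemma exists_bernoulli (hp : p ≤ 1) {μy : Measure (Sym2 Y → Bool)} (hy : IsBernoulli Gy p μy)
    (EDf : Finset (Sym2 X)) (ρ' : Sym2 X → Sym2 Y)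
    (hinj : Set.InjOn ρ' {e | e ∈ Gx.edgeSet ∧ e ∉ EDf})
    (hrange : ∀ e ∈ Gx.edgeSet, e ∉ EDf → ρ' e ∈ Gy.edgeSet) :
    ∃ μx : Measure (Sym2 X → Bool), IsBernoulli Gx p μx := by
  classical
  haveI := hy.1
  set ν : Measure Bool := p • Measure.dirac true + (1 - p) • Measure.dirac false with hν
  have hνs : ∀ b : Bool, ν {b} = if b then p else 1 - p := by
    intro b
    cases b <;>
      simp [hν, Measure.dirac_apply' _ (measurableSet_singleton _), Set.indicator]
  haveI hνprob : IsProbabilityMeasure ν := by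
    constructor
    have htrue : Measure.dirac (α := Bool) true Set.univ = 1 := by simp
    have hfalse : Measure.dirac (α := Bool) false Set.univ = 1 := by simp
    simp only [hν, Measure.add_apply, Measure.smul_apply, htrue, hfalse, smul_eq_mul, mul_one]
    exact add_tsub_cancel_of_le hp
  set κ : Measure (↥EDf → Bool) := Measure.pi fun _ => ν with hκ
  haveI : IsProbabilityMeasure κ := by rw [hκ]; infer_instance
  set Ξ : (Sym2 Y → Bool) × (↥EDf → Bool) → Sym2 X → Bool :=
    fun q e => if h : e ∈ EDf then q.2 ⟨e, h⟩ else if e ∈ Gx.edgeSet then q.1 (ρ' e) else true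
    with hΞ
  have hΞm : Measurable Ξ := by
    rw [measurable_pi_iff]
    intro e
    by_cases h : e ∈ EDf
    · simp only [hΞ, dif_pos h]; exact (measurable_pi_apply _).comp measurable_snd
    · simp only [hΞ, dif_neg h]
      by_cases h2 : e ∈ Gx.edgeSet
      · simp only [if_pos h2]; exact (measurable_pi_apply _).comp measurable_fst
      · simp only [if_neg h2]; exact measurable_const
  refine ⟨Measure.map Ξ (μy.prod κ), Measure.isProbabilityMeasure_map hΞm.aemeasurable, ?_⟩
  intro F hF b
  have hmcyl : MeasurableSet {ω : Sym2 X → Bool | ∀ e ∈ F, ω e = b e} := by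
    have h : {ω : Sym2 X → Bool | ∀ e ∈ F, ω e = b e} =
        ⋂ e ∈ F, (fun ω : Sym2 X → Bool => ω e) ⁻¹' {b e} := by
      ext ω; simp
    rw [h]
    exact MeasurableSet.biInter F.countable_toSet fun e _ =>
      measurable_pi_apply e (measurableSet_singleton (b e))
  rw [Measure.map_apply hΞm hmcyl]
  have hpre : Ξ ⁻¹' {ω : Sym2 X → Bool | ∀ e ∈ F, ω e = b e} =
      {ω1 : Sym2 Y → Bool | ∀ e ∈ F \ EDf, ω1 (ρ' e) = b e} ×ˢ
        {ξ : ↥EDf → Bool | ∀ j : ↥EDf, ↑j ∈ F → ξ j = b ↑j} := by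
    ext q
    simp only [Set.mem_preimage, Set.mem_setOf_eq, Set.mem_prod, Finset.mem_sdiff]
    constructor
    · intro hq
      refine ⟨fun e he => ?_, fun j hj => ?_⟩
      · have h := hq e he.1
        rw [hΞ] at h
        simp only [dif_neg he.2, if_pos (hF (Finset.mem_coe.2 he.1))] at h
        exact h
      · have h := hq ↑j hj
        rw [hΞ] at h
        simp only [dif_pos j.2] at h
        rwa [Subtype.coe_eta] at h
    · rintro ⟨h1, h2⟩ e he
      rw [hΞ]
      by_cases hd : e ∈ EDf
      · simp only [dif_pos hd]
        exact h2 ⟨e, hd⟩ he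
      · have hee : e ∈ Gx.edgeSet := hF (Finset.mem_coe.2 he)
        simp only [dif_neg hd, if_pos hee]
        exact h1 e ⟨he, hd⟩
  rw [hpre, Measure.prod_prod]
  have hval1 : μy {ω1 : Sym2 Y → Bool | ∀ e ∈ F \ EDf, ω1 (ρ' e) = b e} =
      ∏ e ∈ F \ EDf, (if b e then p else 1 - p) := by
    refine hy.cyl_comp (F \ EDf) ρ' ?_ ?_ b
    · refine hinj.mono ?_
      intro e he
      have := Finset.mem_sdiff.1 (Finset.mem_coe.1 he)
      exact ⟨hF (Finset.mem_coe.2 this.1), this.2⟩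
    · intro e he
      have := Finset.mem_sdiff.1 he
      exact hrange e (hF (Finset.mem_coe.2 this.1)) this.2
  have hval2 : κ {ξ : ↥EDf → Bool | ∀ j : ↥EDf, ↑j ∈ F → ξ j = b ↑j} =
      ∏ e ∈ EDf ∩ F, (if b e then p else 1 - p) := by
    have hset2 : {ξ : ↥EDf → Bool | ∀ j : ↥EDf, ↑j ∈ F → ξ j = b ↑j} =
        Set.pi Set.univ (fun j : ↥EDf => if (↑j : Sym2 X) ∈ F then {b ↑j} else Set.univ) := by
      ext ξ
      simp only [Set.mem_setOf_eq, Set.mem_univ_pi]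
      constructor
      · intro h j
        by_cases hj : (↑j : Sym2 X) ∈ F
        · simp only [if_pos hj, Set.mem_singleton_iff]; exact h j hj
        · simp [if_neg hj]
      · intro h j hj
        have := h j
        rwa [if_pos hj, Set.mem_singleton_iff] at this
    rw [hset2, hκ, Measure.pi_pi]
    have hterm : ∀ j : ↥EDf, ν (if (↑j : Sym2 X) ∈ F then {b ↑j} else Set.univ) =
        (if (↑j : Sym2 X) ∈ F then (if b ↑j then p else 1 - p) else 1) := by
      intro j
      by_cases hj : (↑j : Sym2 X) ∈ F
      · rw [if_pos hj, if_pos hj, hνs]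
      · rw [if_neg hj, if_neg hj, measure_univ]
    rw [Finset.prod_congr rfl fun j _ => hterm j]
    rw [Finset.prod_coe_sort EDf (fun e => if e ∈ F then (if b e then p else 1 - p) else 1)]
    rw [Finset.prod_ite_mem EDf F (fun e => if b e then p else 1 - p)]
  rw [hval1, hval2, Finset.inter_comm, ← Finset.prod_union (Finset.disjoint_sdiff_inter F EDf),
    Finset.sdiff_union_inter]

end Constr
lemma openGraph_adj {G : SimpleGraph V} {ω : Sym2 V → Bool} {a b : V} :
    (openGraph G ω).Adj a b ↔ G.Adj a b ∧ ω s(a, b) = true := Iff.rfl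

lemma mem_cluster {G : SimpleGraph V} {ω : Sym2 V → Bool} {x y : V} :
    y ∈ cluster G ω x ↔ (openGraph G ω).Reachable x y := Iff.rfl

section Countable

lemma neighborSet_finite {G : SimpleGraph V} {Δ : ℕ} (hdeg : ∀ x : V, (G.neighborSet x).encard ≤ Δ)
    (x : V) : (G.neighborSet x).Finite :=
  Set.encard_ne_top_iff.1 (fun h => by
    have := hdeg x; rw [h] at this; exact (not_le.2 (WithTop.coe_lt_top Δ)) (le_of_eq (top_le_iff.1 this).symm))

lemma countable_of_connected_of_boundedDegree (G : SimpleGraph V)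
    (hconn : G.Connected) {Δ : ℕ} (hdeg : ∀ x : V, (G.neighborSet x).encard ≤ Δ) :
    Countable V := by
  classical
  haveI : Nonempty V := hconn.nonempty
  have hfin : ∀ x : V, (insert x (G.neighborSet x)).Countable := fun x =>
    ((neighborSet_finite hdeg x).insert x).countable
  have hne : ∀ x : V, (insert x (G.neighborSet x)).Nonempty := fun x => ⟨x, Set.mem_insert _ _⟩
  have henum : ∀ x : V, ∃ f : ℕ → V, insert x (G.neighborSet x) = Set.range f := by
    intro x
    exact ((hfin x).exists_eq_range (hne x))
  choose f hf using henum
  obtain ⟨x₀⟩ := ‹Nonempty V›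
  set F : List ℕ → V := fun l => l.foldl (fun v i => f v i) x₀ with hF
  have hstep : ∀ (l : List ℕ) (i : ℕ), F (l ++ [i]) = f (F l) i := by
    intro l i; simp [hF, List.foldl_append]
  have hcl : ∀ v : V, v ∈ Set.range F → ∀ u : V, G.Adj v u → u ∈ Set.range F := by
    rintro v ⟨l, rfl⟩ u hu
    have h1 : u ∈ insert (F l) (G.neighborSet (F l)) := Set.mem_insert_of_mem _ hu
    rw [hf (F l)] at h1
    obtain ⟨i, hi⟩ := h1
    exact ⟨l ++ [i], by rw [hstep]; exact hi⟩
  have haux : ∀ {a b : V} (_ : G.Walk a b), a ∈ Set.range F → b ∈ Set.range F := by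
    intro a b p
    induction p with
    | nil => exact id
    | cons h q ih => intro ha; exact ih (hcl _ ha _ h)
  have hsurj : Function.Surjective F := by
    intro v
    obtain ⟨p⟩ := hconn.preconnected x₀ v
    exact haux p ⟨[], rfl⟩
  exact hsurj.countable

end Countable

section Meas

lemma measurableSet_chain (G : SimpleGraph V) (x : V) (l : List V) :
    MeasurableSet {ω : Sym2 V → Bool | List.Chain (fun a b => (openGraph G ω).Adj a b) x l} := by
  induction l generalizing x with
  | nil => simp [List.Chain]
  | cons b t ih =>
    have h : {ω : Sym2 V → Bool | List.Chain (fun a b => (openGraph G ω).Adj a b) x (b :: t)} =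
        ({ω : Sym2 V → Bool | G.Adj x b} ∩ ((fun ω : Sym2 V → Bool => ω s(x, b)) ⁻¹' {true})) ∩
          {ω : Sym2 V → Bool | List.Chain (fun a c => (openGraph G ω).Adj a c) b t} := by
      ext ω
      simp only [Set.mem_setOf_eq, List.Chain, List.chain_cons, Set.mem_inter_iff, Set.mem_preimage,
        Set.mem_singleton_iff, openGraph_adj]
      try tauto
    rw [h]
    exact ((MeasurableSet.const _).inter
      (measurable_pi_apply _ (measurableSet_singleton _))).inter (ih b)

lemma reachable_iff_exists_list (G : SimpleGraph V) (ω : Sym2 V → Bool) (x y : V) :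
    (openGraph G ω).Reachable x y ↔
      ∃ l : List V, List.Chain (fun a b => (openGraph G ω).Adj a b) x l ∧ l.getLastD x = y := by
  constructor
  · rintro ⟨p⟩
    induction p with
    | nil => exact ⟨[], List.Chain.nil, rfl⟩
    | @cons a u b h q ih =>
      obtain ⟨l, hl, hlast⟩ := ih
      exact ⟨u :: l, List.Chain.cons h hl, by rw [List.getLastD_cons]; exact hlast⟩
  · rintro ⟨l, hl, hlast⟩
    induction l generalizing x with
    | nil =>
      rw [List.getLastD_nil] at hlast
      subst hlast
      exact SimpleGraph.Reachable.refl x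
    | cons u t ih =>
      rw [List.Chain, List.chain_cons] at hl
      rw [List.getLastD_cons] at hlast
      exact (SimpleGraph.Adj.reachable hl.1).trans (ih u hl.2 hlast)

lemma measurableSet_mem_cluster [Countable V] (G : SimpleGraph V) (x y : V) :
    MeasurableSet {ω : Sym2 V → Bool | y ∈ cluster G ω x} := by
  have h : {ω : Sym2 V → Bool | y ∈ cluster G ω x} =
      ⋃ l : List V, ⋃ (_ : l.getLastD x = y),
        {ω : Sym2 V → Bool | List.Chain (fun a b => (openGraph G ω).Adj a b) x l} := by
    ext ω
    simp only [Set.mem_iUnion, Set.mem_setOf_eq, mem_cluster, reachable_iff_exists_list]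
    constructor
    · rintro ⟨l, h1, h2⟩; exact ⟨l, h2, h1⟩
    · rintro ⟨l, h2, h1⟩; exact ⟨l, h1, h2⟩
  rw [h]
  exact MeasurableSet.iUnion fun l => MeasurableSet.iUnion fun _ => measurableSet_chain G x l

lemma lt_encard_iff_finset {α : Type*} {S : Set α} {n : ℕ} :
    (n : ℕ∞) < S.encard ↔ ∃ T : Finset α, ↑T ⊆ S ∧ T.card = n + 1 := by
  constructor
  · intro h
    have h1 : ((n + 1 : ℕ) : ℕ∞) ≤ S.encard := by
      rw [Nat.cast_add, Nat.cast_one, ENat.add_one_le_iff (by simp)]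
      exact h
    obtain ⟨t, hts, htc⟩ := Set.exists_subset_encard_eq h1
    have hfin : t.Finite := Set.encard_ne_top_iff.1 (by rw [htc]; exact ENat.coe_ne_top (n + 1))
    refine ⟨hfin.toFinset, by simpa using hts, ?_⟩
    rw [hfin.encard_eq_coe_toFinset_card] at htc
    exact_mod_cast htc
  · rintro ⟨T, hT, hc⟩
    have h1 := Set.encard_le_encard hT
    rw [Set.encard_coe_eq_coe_finsetCard, hc] at h1
    calc (n : ℕ∞) < ((n + 1 : ℕ) : ℕ∞) := by exact_mod_cast Nat.lt_succ_self n
    _ ≤ S.encard := h1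

lemma measurableSet_cluster_gt [Countable V] (G : SimpleGraph V) (x : V) (n : ℕ) :
    MeasurableSet {ω : Sym2 V → Bool | (n : ℕ∞) < (cluster G ω x).encard} := by
  have h : {ω : Sym2 V → Bool | (n : ℕ∞) < (cluster G ω x).encard} =
      ⋃ T : Finset V, ⋃ (_ : T.card = n + 1), ⋂ y ∈ T, {ω | y ∈ cluster G ω x} := by
    ext ω
    simp only [Set.mem_setOf_eq, Set.mem_iUnion, Set.mem_iInter, lt_encard_iff_finset]
    constructor
    · rintro ⟨T, hT, hc⟩; exact ⟨T, hc, fun y hy => hT hy⟩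
    · rintro ⟨T, hc, hT⟩; exact ⟨T, fun y hy => hT y hy, hc⟩
  rw [h]
  exact MeasurableSet.iUnion fun T => MeasurableSet.iUnion fun _ =>
    MeasurableSet.biInter T.countable_toSet fun y _ => measurableSet_mem_cluster G x y

end Meas

section Graph

lemma cluster_congr {G : SimpleGraph V} {ω₁ ω₂ : Sym2 V → Bool}
    (h : ∀ e ∈ G.edgeSet, ω₁ e = ω₂ e) (x : V) : cluster G ω₁ x = cluster G ω₂ x := by
  have hog : openGraph G ω₁ = openGraph G ω₂ := by
    ext a b
    simp only [openGraph_adj]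
    constructor
    · rintro ⟨ha, hw⟩
      exact ⟨ha, by rw [← h _ ((G.mem_edgeSet).mpr ha)]; exact hw⟩
    · rintro ⟨ha, hw⟩
      exact ⟨ha, by rw [h _ ((G.mem_edgeSet).mpr ha)]; exact hw⟩
  unfold cluster
  rw [hog]

lemma reachable_of_mem_support {G : SimpleGraph V} {x y a : V} (p : G.Walk x y)
    (ha : a ∈ p.support) : G.Reachable x a := by
  classical
  exact ⟨p.takeUntil a ha⟩

lemma exit_prefix {V' : Type*} {H : SimpleGraph V'} {E' : Set V'} :
    ∀ {y d : V'} (_ : H.Walk y d), y ∉ E' → d ∈ E' →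
      ∃ w t, w ∉ E' ∧ t ∈ E' ∧ H.Adj w t ∧
        ∃ q : H.Walk y w, ∀ a ∈ q.support, a ∉ E' := by
  intro y d p
  induction p with
  | nil => intro hy hd; exact absurd hd hy
  | @cons a u b h q ih =>
    intro hy hd
    by_cases hu : u ∈ E'
    · refine ⟨a, u, hy, hu, h, SimpleGraph.Walk.nil, ?_⟩
      intro s hs
      rw [SimpleGraph.Walk.support_nil] at hs
      simp at hs
      subst hs; exact hy
    · obtain ⟨w, t, hw, ht, hadj, r, hr⟩ := ih hu hd
      refine ⟨w, t, hw, ht, hadj, SimpleGraph.Walk.cons h r, ?_⟩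
      intro s hs
      rw [SimpleGraph.Walk.support_cons] at hs
      rcases List.mem_cons.1 hs with rfl | hs
      · exact hy
      · exact hr s hs

lemma walk_open_reachable {G : SimpleGraph V} {ω : Sym2 V → Bool} {E : Set V}
    (hopen : ∀ a b : V, G.Adj a b → (a ∈ E ∨ b ∈ E) → ω s(a, b) = true) :
    ∀ {a u : V} (r : G.Walk a u), (∀ s ∈ r.support, s ∈ E) → (openGraph G ω).Reachable a u := by
  intro a u r
  induction r with
  | nil => intro _; exact SimpleGraph.Reachable.refl _
  | @cons a b u h q ih =>
    intro hs
    have ha : a ∈ E := hs a (by rw [SimpleGraph.Walk.support_cons]; exact List.mem_cons_self)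
    refine (SimpleGraph.Adj.reachable
      (show (openGraph G ω).Adj a b from ⟨h, hopen a b h (Or.inl ha)⟩)).trans (ih ?_)
    intro s hs'
    exact hs s (by rw [SimpleGraph.Walk.support_cons]; exact List.mem_cons_of_mem _ hs')

lemma map_edge_injOn {α β : Type*} (f : α → β) {s : Set α} (hf : Set.InjOn f s)
    (e₁ e₂ : Sym2 α) (h1 : ∀ v ∈ e₁, v ∈ s) (h2 : ∀ v ∈ e₂, v ∈ s)
    (heq : Sym2.map f e₁ = Sym2.map f e₂) : e₁ = e₂ := by
  induction e₁ using Sym2.ind with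
  | _ a b =>
    induction e₂ using Sym2.ind with
    | _ c d =>
      rw [Sym2.map_pair_eq, Sym2.map_pair_eq] at heq
      rw [Sym2.eq_iff] at heq ⊢
      have ha := h1 a (by simp)
      have hb := h1 b (by simp)
      have hc := h2 c (by simp)
      have hd := h2 d (by simp)
      rcases heq with ⟨x1, x2⟩ | ⟨x1, x2⟩
      · exact Or.inl ⟨hf ha hc x1, hf hb hd x2⟩
      · exact Or.inr ⟨hf ha hd x1, hf hb hc x2⟩

lemma map_edge_mem {α β : Type*} {Ga : SimpleGraph α} {Gb : SimpleGraph β} (f : α → β) {s : Set α}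
    (hf : ∀ u v, u ∈ s → v ∈ s → Ga.Adj u v → Gb.Adj (f u) (f v))
    {e : Sym2 α} (he : e ∈ Ga.edgeSet) (hs : ∀ v ∈ e, v ∈ s) : Sym2.map f e ∈ Gb.edgeSet := by
  induction e using Sym2.ind with
  | _ u v =>
    rw [Sym2.map_pair_eq, SimpleGraph.mem_edgeSet]
    rw [SimpleGraph.mem_edgeSet] at he
    exact hf u v (hs u (by simp)) (hs v (by simp)) he

end Graph

section Transport

variable {V' : Type*} {G : SimpleGraph V} {G' : SimpleGraph V'} {E : Set V} {E' : Set V'}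

lemma walk_transport (σ : V' → V) {ω' : Sym2 V' → Bool} {ω : Sym2 V → Bool}
    (hadj : ∀ u v : V', u ∉ E' → v ∉ E' → G'.Adj u v → G.Adj (σ u) (σ v))
    (hrel : ∀ u v : V', u ∉ E' → v ∉ E' → G'.Adj u v → ω' s(u, v) = true →
      ω s(σ u, σ v) = true) :
    ∀ {a y : V'} (q : (openGraph G' ω').Walk a y), (∀ s ∈ q.support, s ∉ E') →
      (openGraph G ω).Reachable (σ a) (σ y) := by
  intro a y q
  induction q with
  | nil => intro _; exact SimpleGraph.Reachable.refl _
  | @cons a u y h q ih =>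
    intro hs
    have ha : a ∉ E' := hs a (by rw [SimpleGraph.Walk.support_cons]; exact List.mem_cons_self)
    have hu : u ∉ E' := hs u (by
      rw [SimpleGraph.Walk.support_cons]
      exact List.mem_cons_of_mem _ q.start_mem_support)
    have h1 : (openGraph G ω).Adj (σ a) (σ u) := ⟨hadj a u ha hu h.1, hrel a u ha hu h.1 h.2⟩
    exact h1.reachable.trans (ih fun s hs' => hs s (by
      rw [SimpleGraph.Walk.support_cons]; exact List.mem_cons_of_mem _ hs'))

lemma cluster_transport_avoid (σ : V' → V) (hσinj : Set.InjOn σ E'ᶜ)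
    {ω' : Sym2 V' → Bool} {ω : Sym2 V → Bool}
    (hadj : ∀ u v : V', u ∉ E' → v ∉ E' → G'.Adj u v → G.Adj (σ u) (σ v))
    (hrel : ∀ u v : V', u ∉ E' → v ∉ E' → G'.Adj u v → ω' s(u, v) = true →
      ω s(σ u, σ v) = true)
    {x : V'} {n : ℕ}
    (hA : (n : ℕ∞) < (cluster G' ω' x).encard)
    (havoid : ∀ d ∈ E', d ∉ cluster G' ω' x) :
    (n : ℕ∞) < (cluster G ω (σ x)).encard := by
  classical
  set C := cluster G' ω' x with hC
  have hCsub : C ⊆ E'ᶜ := fun y hy hyE' => havoid y hyE' hy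
  have himg : σ '' C ⊆ cluster G ω (σ x) := by
    rintro _ ⟨y, hy, rfl⟩
    obtain ⟨p⟩ := (hy : (openGraph G' ω').Reachable x y)
    have hsup : ∀ s ∈ p.support, s ∉ E' := fun s hs =>
      hCsub (reachable_of_mem_support p hs)
    exact walk_transport σ hadj hrel p hsup
  calc (n : ℕ∞) < C.encard := hA
  _ = (σ '' C).encard := ((hσinj.mono hCsub).encard_image).symm
  _ ≤ _ := Set.encard_le_encard himg

lemma cluster_transport_meet (ψ : G.induce Eᶜ ≃g G'.induce E'ᶜ) (z : V) (σ : V' → V)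
    (hσ : ∀ (w : V') (h : w ∉ E'), σ w = ↑(ψ.symm ⟨w, h⟩))
    (hσinj : Set.InjOn σ E'ᶜ) (hzE : z ∈ E)
    (hP3 : ∀ u ∈ E, ∃ w : G.Walk z u, ∀ a ∈ w.support, a ∈ E)
    (hP4 : ∀ (w : V') (hw : w ∉ E') (t : V'), t ∈ E' → G'.Adj w t →
      ∃ v ∈ E, G.Adj ↑(ψ.symm ⟨w, hw⟩) v)
    {ω' : Sym2 V' → Bool} {ω : Sym2 V → Bool}
    (hadj : ∀ u v : V', u ∉ E' → v ∉ E' → G'.Adj u v → G.Adj (σ u) (σ v))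
    (hrel : ∀ u v : V', u ∉ E' → v ∉ E' → G'.Adj u v → ω' s(u, v) = true →
      ω s(σ u, σ v) = true)
    (hopen : ∀ a b : V, G.Adj a b → (a ∈ E ∨ b ∈ E) → ω s(a, b) = true)
    {x : V'} {n k : ℕ} (hk : E'.encard ≤ k)
    (hA : (n : ℕ∞) < (cluster G' ω' x).encard)
    (hmeet : ∃ d ∈ E', d ∈ cluster G' ω' x) :
    ((n - k : ℕ) : ℕ∞) < (cluster G ω z).encard := by
  classical
  obtain ⟨d, hdE', hdC⟩ := hmeet
  set C := cluster G' ω' x with hC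
  set Cin := C \ E' with hCin
  have himg : σ '' Cin ⊆ cluster G ω z := by
    rintro _ ⟨y, ⟨hyC, hyE'⟩, rfl⟩
    have hyd : (openGraph G' ω').Reachable y d :=
      ((hyC : (openGraph G' ω').Reachable x y).symm).trans hdC
    obtain ⟨p⟩ := hyd
    obtain ⟨w, t, hw, ht, hadj', q, hq⟩ := exit_prefix p hyE' hdE'
    have h1 : (openGraph G ω).Reachable (σ y) (σ w) := walk_transport σ hadj hrel q hq
    obtain ⟨v, hvE, hGadj⟩ := hP4 w hw t ht hadj'.1
    have h2 : (openGraph G ω).Adj (σ w) v := by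
      rw [hσ w hw]
      exact ⟨hGadj, hopen _ _ hGadj (Or.inr hvE)⟩
    obtain ⟨r, hr⟩ := hP3 v hvE
    have h3 : (openGraph G ω).Reachable z v := walk_open_reachable hopen r hr
    show (openGraph G ω).Reachable z (σ y)
    exact (h3.trans h2.symm.reachable).trans h1.symm
  have hzC : z ∈ cluster G ω z := SimpleGraph.Reachable.refl z
  by_cases hkn : k ≤ n
  · have hC1 : C.encard ≤ Cin.encard + k := by
      calc C.encard ≤ (Cin ∪ E').encard := Set.encard_le_encard (fun y hy => by
            by_cases hyE' : y ∈ E'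
            · exact Or.inr hyE'
            · exact Or.inl ⟨hy, hyE'⟩)
      _ ≤ Cin.encard + E'.encard := Set.encard_union_le _ _
      _ ≤ Cin.encard + k := add_le_add (le_refl _) hk
    have h5 : ((n + 1 : ℕ) : ℕ∞) ≤ Cin.encard + k := by
      refine le_trans ?_ hC1
      rw [Nat.cast_add, Nat.cast_one, ENat.add_one_le_iff (by simp)]
      exact hA
    have h6 : ((n + 1 - k : ℕ) : ℕ∞) ≤ Cin.encard := by
      rw [ENat.coe_sub]
      exact tsub_le_iff_right.2 (by exact_mod_cast h5)
    have h7 : ((n - k : ℕ) : ℕ∞) < Cin.encard := by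
      have hnk : n + 1 - k = (n - k) + 1 := by omega
      rw [hnk] at h6
      calc ((n - k : ℕ) : ℕ∞) < ((n - k + 1 : ℕ) : ℕ∞) := by exact_mod_cast Nat.lt_succ_self _
      _ ≤ _ := h6
    calc ((n - k : ℕ) : ℕ∞) < Cin.encard := h7
    _ = (σ '' Cin).encard := ((hσinj.mono (fun y hy => hy.2)).encard_image).symm
    _ ≤ (cluster G ω z).encard := Set.encard_le_encard himg
  · have hnk : n - k = 0 := by omega
    rw [hnk]
    simp only [Nat.cast_zero]
    exact Set.encard_pos.2 ⟨z, hzC⟩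

end Transport
lemma exists_good_mod {V V' : Type*} (G : SimpleGraph V) (G' : SimpleGraph V')
    (hconn : G.Connected) {Δ' : ℕ} (hdeg' : ∀ x : V', (G'.neighborSet x).encard ≤ Δ')
    (hmod : FiniteModification G G') (hne' : Nonempty V') :
    ∃ (E : Set V) (E' : Set V') (ψ : G.induce Eᶜ ≃g G'.induce E'ᶜ) (z : V),
      E.Finite ∧ E'.Finite ∧ z ∈ E ∧
      (∀ u ∈ E, ∃ w : G.Walk z u, ∀ a ∈ w.support, a ∈ E) ∧
      (∀ (w : V') (hw : w ∉ E') (t : V'), t ∈ E' → G'.Adj w t →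
        ∃ v ∈ E, G.Adj ↑(ψ.symm ⟨w, hw⟩) v) := by
  classical
  haveI := hne'
  obtain ⟨D, D', hD, hD', ⟨φ⟩⟩ := hmod
  haveI : Nonempty V := hconn.nonempty
  -- boundary of D'
  set W' : Set V' := {w : V' | w ∉ D' ∧ ∃ t ∈ D', G'.Adj w t} with hW'
  have hW'fin : W'.Finite := by
    have hsub : W' ⊆ ⋃ t ∈ D', G'.neighborSet t := by
      rintro w ⟨hw, t, ht, hadjwt⟩
      exact Set.mem_biUnion ht hadjwt.symm
    exact (hD'.biUnion fun t _ => neighborSet_finite hdeg' t).subset hsub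
  -- transport of W' to V
  set X : Set V := {v : V | ∃ (w : V') (h : w ∉ D'), w ∈ W' ∧ (↑(φ.symm ⟨w, h⟩) : V) = v} with hX
  have hXfin : X.Finite := by
    have hsub : X ⊆ (fun w : V' =>
        if h : w ∉ D' then (↑(φ.symm ⟨w, h⟩) : V) else Classical.arbitrary V) '' W' := by
      rintro v ⟨w, h, hw, rfl⟩
      exact ⟨w, hw, by dsimp only; rw [dif_pos h]⟩
    exact (hW'fin.image _).subset hsub
  obtain ⟨z₀⟩ := ‹Nonempty V›
  set Y : Set V := X ∪ D ∪ {z₀} with hY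
  have hYfin : Y.Finite := (hXfin.union hD).union (Set.finite_singleton z₀)
  have hwalk : ∀ u : V, ∃ _ : G.Walk z₀ u, True := fun u =>
    ⟨(hconn.preconnected z₀ u).some, trivial⟩
  choose wk _ using hwalk
  set E : Set V := ⋃ u ∈ Y, {a | a ∈ (wk u).support} with hE
  have hEfin : E.Finite := hYfin.biUnion fun u _ => (wk u).support.finite_toSet
  have hYE : Y ⊆ E := fun u hu => Set.mem_biUnion hu (wk u).end_mem_support
  have hDE : D ⊆ E := fun v hv => hYE (Or.inl (Or.inr hv))
  have hzE : z₀ ∈ E := hYE (Or.inr rfl)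
  have hXE : X ⊆ E := fun v hv => hYE (Or.inl (Or.inl hv))
  have hEDc : ∀ v : V, v ∉ E → v ∉ D := fun v hv hd => hv (hDE hd)
  set E' : Set V' := {w : V' | ∀ h : w ∉ D', (↑(φ.symm ⟨w, h⟩) : V) ∈ E} with hE'
  have hD'E' : D' ⊆ E' := fun w hw h => absurd hw h
  have hE'cD'c : ∀ w : V', w ∉ E' → w ∉ D' := fun w hw hD'w => hw (hD'E' hD'w)
  have hE'mem : ∀ (w : V') (h : w ∉ D'), w ∈ E' ↔ (↑(φ.symm ⟨w, h⟩) : V) ∈ E := by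
    intro w h
    constructor
    · intro hw; exact hw h
    · intro hv h'; exact hv
  have hE'fin : E'.Finite := by
    have hsub : E' ⊆ D' ∪ (fun v : V =>
        if h : v ∉ D then (↑(φ ⟨v, h⟩) : V') else Classical.arbitrary V') '' E := by
      intro w hw
      by_cases hD'mem : w ∈ D'
      · exact Or.inl hD'mem
      · right
        refine ⟨↑(φ.symm ⟨w, hD'mem⟩), hw hD'mem, ?_⟩
        have hvD : (↑(φ.symm ⟨w, hD'mem⟩) : V) ∉ D := (φ.symm ⟨w, hD'mem⟩).2
        dsimp only
        rw [dif_pos hvD]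
        have h3 : φ ⟨↑(φ.symm ⟨w, hD'mem⟩), hvD⟩ = ⟨w, hD'mem⟩ := by
          rw [Subtype.coe_eta]
          exact φ.apply_symm_apply _
        rw [h3]
    exact (hD'.union (hEfin.image _)).subset hsub
  -- the iso
  have hfwd : ∀ v : ↥(Eᶜ), (↑(φ ⟨↑v, hEDc ↑v v.2⟩) : V') ∈ E'ᶜ := by
    intro v hcon
    have h1 : (↑(φ ⟨↑v, hEDc ↑v v.2⟩) : V') ∉ D' := (φ ⟨↑v, hEDc ↑v v.2⟩).2
    have h2 := hcon h1
    have h3 : φ.symm ⟨↑(φ ⟨↑v, hEDc ↑v v.2⟩), h1⟩ = ⟨↑v, hEDc ↑v v.2⟩ := by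
      rw [Subtype.coe_eta]
      exact φ.symm_apply_apply _
    rw [h3] at h2
    exact v.2 h2
  have hbwd : ∀ w : ↥(E'ᶜ), (↑(φ.symm ⟨↑w, hE'cD'c ↑w w.2⟩) : V) ∈ Eᶜ := by
    intro w hcon
    exact w.2 ((hE'mem ↑w (hE'cD'c ↑w w.2)).2 hcon)
  set ψe : ↥(Eᶜ) ≃ ↥(E'ᶜ) :=
    { toFun := fun v => ⟨↑(φ ⟨↑v, hEDc ↑v v.2⟩), hfwd v⟩
      invFun := fun w => ⟨↑(φ.symm ⟨↑w, hE'cD'c ↑w w.2⟩), hbwd w⟩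
      left_inv := by
        intro v
        apply Subtype.ext
        show (↑(φ.symm ⟨↑(φ ⟨↑v, hEDc ↑v v.2⟩), _⟩) : V) = ↑v
        rw [Subtype.coe_eta, φ.symm_apply_apply]
      right_inv := by
        intro w
        apply Subtype.ext
        show (↑(φ ⟨↑(φ.symm ⟨↑w, hE'cD'c ↑w w.2⟩), _⟩) : V') = ↑w
        rw [Subtype.coe_eta, φ.apply_symm_apply] } with hψe
  set ψ : G.induce Eᶜ ≃g G'.induce E'ᶜ :=
    { toEquiv := ψe
      map_rel_iff' := by
        intro a b
        show (G'.induce E'ᶜ).Adj (ψe a) (ψe b) ↔ (G.induce Eᶜ).Adj a b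
        have h1 := φ.map_rel_iff' (a := ⟨↑a, hEDc ↑a a.2⟩) (b := ⟨↑b, hEDc ↑b b.2⟩)
        simp only [SimpleGraph.comap_adj, Function.Embedding.coe_subtype] at h1 ⊢
        exact h1 } with hψ
  refine ⟨E, E', ψ, z₀, hEfin, hE'fin, hzE, ?_, ?_⟩
  · -- P3
    intro u hu
    rw [hE] at hu
    obtain ⟨u₁, hu₁, husup⟩ := Set.mem_iUnion₂.1 hu
    refine ⟨(wk u₁).takeUntil u husup, ?_⟩
    intro a ha
    have ha2 : a ∈ (wk u₁).support := (wk u₁).support_takeUntil_subset husup ha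
    exact Set.mem_biUnion hu₁ ha2
  · -- P4
    intro w hw t ht hadjwt
    have hwD' : w ∉ D' := hE'cD'c w hw
    have hψsymm : (↑(ψ.symm ⟨w, hw⟩) : V) = ↑(φ.symm ⟨w, hwD'⟩) := rfl
    by_cases htD' : t ∈ D'
    · exfalso
      have hwW' : w ∈ W' := ⟨hwD', t, htD', hadjwt⟩
      have hXmem : (↑(φ.symm ⟨w, hwD'⟩) : V) ∈ X := ⟨w, hwD', hwW', rfl⟩
      exact hw ((hE'mem w hwD').2 (hXE hXmem))
    · have hvE : (↑(φ.symm ⟨t, htD'⟩) : V) ∈ E := ht htD'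
      refine ⟨↑(φ.symm ⟨t, htD'⟩), hvE, ?_⟩
      rw [hψsymm]
      have h1 := φ.symm.map_rel_iff' (a := (⟨w, hwD'⟩ : ↥(D'ᶜ))) (b := ⟨t, htD'⟩)
      simp only [SimpleGraph.comap_adj, Function.Embedding.coe_subtype] at h1
      exact h1.2 hadjwt


end Aux18

/-- exponential decay of cluster sizes transfers to finite modifications. -/
theorem statement_18 {V V' : Type*} (G : SimpleGraph V) (G' : SimpleGraph V')
    (hV : Infinite V) (hV' : Infinite V') (hconn : G.Connected) (hconn' : G'.Connected)
    (hdeg : ∃ Δ : ℕ, ∀ x : V, ((G.neighborSet x).encard : ℕ∞) ≤ Δ)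
    (hdeg' : ∃ Δ : ℕ, ∀ x : V', ((G'.neighborSet x).encard : ℕ∞) ≤ Δ)
    (hmod : FiniteModification G G')
    (p : ℝ≥0∞) (hp : p ≤ 1)
    (hdecay : ∀ μ : Measure (Sym2 V → Bool), IsBernoulli G p μ →
      ∃ C c : ℝ, 0 < c ∧ ∀ (x : V) (n : ℕ),
        μ {ω | (n : ℕ∞) < (cluster G ω x).encard} ≤ ENNReal.ofReal (C * Real.exp (-c * n))) :
    ∀ μ' : Measure (Sym2 V' → Bool), IsBernoulli G' p μ' →
      ∃ C c : ℝ, 0 < c ∧ ∀ (x : V') (n : ℕ), 1 ≤ n →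
        μ' {ω | (n : ℕ∞) < (cluster G' ω x).encard} ≤
          ENNReal.ofReal (C * Real.exp (-c * n)) := by
  classical
  intro μ' hμ'
  haveI hμ'prob := hμ'.1
  obtain ⟨Δ', hdeg'⟩ := hdeg'
  obtain ⟨Δ, hdegG⟩ := hdeg
  haveI hcnt' : Countable V' := countable_of_connected_of_boundedDegree G' hconn' hdeg'
  by_cases hp0 : p = 0
  · -- trivial case
    subst hp0
    refine ⟨1, 1, one_pos, ?_⟩
    intro x n hn
    have hzero : μ' {ω | (n : ℕ∞) < (cluster G' ω x).encard} = 0 := by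
      have hsub : {ω : Sym2 V' → Bool | (n : ℕ∞) < (cluster G' ω x).encard} ⊆
          ⋃ u : V', ⋃ (_ : G'.Adj x u), {ω : Sym2 V' → Bool | ω s(x, u) = true} := by
        intro ω hω
        have h1 : (1 : ℕ∞) < (cluster G' ω x).encard :=
          lt_of_le_of_lt (by exact_mod_cast hn) hω
        obtain ⟨a, b, ha, hb, hab⟩ := Set.one_lt_encard_iff.1 h1
        have hy : ∃ y ∈ cluster G' ω x, y ≠ x := by
          by_cases hax : a = x
          · exact ⟨b, hb, fun hbx => hab (by rw [hbx, hax])⟩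
          · exact ⟨a, ha, hax⟩
        obtain ⟨y, hyC, hyx⟩ := hy
        obtain ⟨q⟩ := (hyC : (openGraph G' ω).Reachable x y)
        cases q with
        | nil => exact absurd rfl hyx.symm
        | cons h q' => exact Set.mem_iUnion.2 ⟨_, Set.mem_iUnion.2 ⟨h.1, h.2⟩⟩
      refine le_antisymm (le_trans (measure_mono hsub) ?_) zero_le
      refine le_trans (measure_iUnion_le _) ?_
      have hterm : ∀ u : V', μ' (⋃ (_ : G'.Adj x u), {ω : Sym2 V' → Bool | ω s(x, u) = true}) ≤ 0 := by
        intro u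
        by_cases hadj : G'.Adj x u
        · refine le_trans (measure_mono (Set.iUnion_subset fun _ => Set.Subset.refl _)) ?_
          have hset : {ω : Sym2 V' → Bool | ω s(x, u) = true} =
              {ω : Sym2 V' → Bool | ∀ e ∈ ({s(x, u)} : Finset (Sym2 V')), ω e = (fun _ => true) e} := by
            ext ω; simp
          rw [hset, hμ'.2 _ ?_ _]
          · simp
          · intro e he
            simp only [Finset.coe_singleton, Set.mem_singleton_iff] at he
            subst he
            exact (G'.mem_edgeSet).2 hadj
        · simp [hadj]
      calc ∑' u : V', μ' (⋃ (_ : G'.Adj x u), {ω : Sym2 V' → Bool | ω s(x, u) = true})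
          ≤ ∑' _ : V', (0 : ℝ≥0∞) := ENNReal.tsum_le_tsum hterm
        _ = 0 := by simp
    rw [hzero]
    exact zero_le
  · -- main case
    haveI hne' : Nonempty V' := hconn'.nonempty
    obtain ⟨E, E', ψ, z, hEfin, hE'fin, hzE, hP3, hP4⟩ :=
      exists_good_mod G G' hconn hdeg' hmod hne'
    set σ : V' → V := fun w => if h : w ∉ E' then ↑(ψ.symm ⟨w, h⟩) else z with hσdef
    have hσeq : ∀ (w : V') (h : w ∉ E'), σ w = ↑(ψ.symm ⟨w, h⟩) := fun w h => by
      simp only [hσdef]; rw [dif_pos h]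
    have hσEc : ∀ (w : V') (h : w ∉ E'), σ w ∉ E := fun w h => by
      rw [hσeq w h]; exact (ψ.symm ⟨w, h⟩).2
    have hσinj : Set.InjOn σ E'ᶜ := by
      intro u hu v hv huv
      rw [hσeq u hu, hσeq v hv] at huv
      have h2 : ψ.symm ⟨u, hu⟩ = ψ.symm ⟨v, hv⟩ := Subtype.ext huv
      have h3 := ψ.symm.injective h2
      exact congrArg Subtype.val h3
    have hσadj : ∀ u v : V', u ∉ E' → v ∉ E' → G'.Adj u v → G.Adj (σ u) (σ v) := by
      intro u v hu hv hadjuv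
      rw [hσeq u hu, hσeq v hv]
      have h1 := ψ.symm.map_rel_iff' (a := (⟨u, hu⟩ : ↥(E'ᶜ))) (b := ⟨v, hv⟩)
      simp only [SimpleGraph.comap_adj, Function.Embedding.coe_subtype] at h1
      exact h1.2 hadjuv
    -- edge sets
    set EIs : Set (Sym2 V') := {e | e ∈ G'.edgeSet ∧ ∀ v ∈ e, v ∉ E'} with hEIs
    set Fs : Set (Sym2 V') := {e | e ∈ G'.edgeSet ∧ ∃ v ∈ e, v ∈ E'} with hFs
    have hFsfin : Fs.Finite := by
      have hsub : Fs ⊆ ⋃ t ∈ E', (fun u => s(t, u)) '' (G'.neighborSet t) := by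
        rintro e ⟨he, v, hv, hvE'⟩
        obtain ⟨u, rfl⟩ := Sym2.mem_iff_exists.1 hv
        have hadj : G'.Adj v u := (G'.mem_edgeSet).1 he
        exact Set.mem_biUnion hvE' ⟨u, hadj, rfl⟩
      exact (hE'fin.biUnion fun t _ => (neighborSet_finite hdeg' t).image _).subset hsub
    set Ff : Finset (Sym2 V') := hFsfin.toFinset with hFf
    set EDs : Set (Sym2 V) := {e | e ∈ G.edgeSet ∧ ∃ v ∈ e, v ∈ E} with hEDs
    have hEDsfin : EDs.Finite := by
      have hsub : EDs ⊆ ⋃ t ∈ E, (fun u => s(t, u)) '' (G.neighborSet t) := by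
        rintro e ⟨he, v, hv, hvE⟩
        obtain ⟨u, rfl⟩ := Sym2.mem_iff_exists.1 hv
        have hadj : G.Adj v u := (G.mem_edgeSet).1 he
        exact Set.mem_biUnion hvE ⟨u, hadj, rfl⟩
      exact (hEfin.biUnion fun t _ => (neighborSet_finite hdegG t).image _).subset hsub
    set EDf : Finset (Sym2 V) := hEDsfin.toFinset with hEDf
    have hedge_split : ∀ e ∈ G'.edgeSet, e ∉ EIs → e ∈ Ff := by
      intro e he hnein
      rw [hFf, Set.Finite.mem_toFinset]
      refine ⟨he, ?_⟩
      by_contra hcon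
      push_neg at hcon
      exact hnein ⟨he, hcon⟩
    have hEDsub : (↑EDf : Set (Sym2 V)) ⊆ G.edgeSet := by
      intro e he
      rw [Finset.mem_coe, hEDf, Set.Finite.mem_toFinset] at he
      exact he.1
    -- Bernoulli measure on G
    set σ' : V → V' := fun v => if h : v ∉ E then ↑(ψ ⟨v, h⟩) else Classical.arbitrary V'
      with hσ'def
    have hσ'eq : ∀ (v : V) (h : v ∉ E), σ' v = ↑(ψ ⟨v, h⟩) := fun v h => by
      simp only [hσ'def]; rw [dif_pos h]
    have hσ'inj : Set.InjOn σ' Eᶜ := by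
      intro u hu v hv huv
      rw [hσ'eq u hu, hσ'eq v hv] at huv
      have h2 : ψ ⟨u, hu⟩ = ψ ⟨v, hv⟩ := Subtype.ext huv
      have h3 := ψ.injective h2
      exact congrArg Subtype.val h3
    have hσ'adj : ∀ u v : V, u ∉ E → v ∉ E → G.Adj u v → G'.Adj (σ' u) (σ' v) := by
      intro u v hu hv hadjuv
      rw [hσ'eq u hu, hσ'eq v hv]
      have h1 := ψ.map_rel_iff' (a := (⟨u, hu⟩ : ↥(Eᶜ))) (b := ⟨v, hv⟩)
      simp only [SimpleGraph.comap_adj, Function.Embedding.coe_subtype] at h1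
      exact h1.2 hadjuv
    have hnotED : ∀ e ∈ G.edgeSet, e ∉ EDf → ∀ v ∈ e, v ∉ E := by
      intro e he hnein v hv hvE
      exact hnein (by rw [hEDf, Set.Finite.mem_toFinset]; exact ⟨he, v, hv, hvE⟩)
    obtain ⟨μ, hμ⟩ := exists_bernoulli hp hμ' EDf (Sym2.map σ')
      (fun e₁ he₁ e₂ he₂ heq => map_edge_injOn σ' hσ'inj e₁ e₂
        (fun v hv => hnotED e₁ he₁.1 he₁.2 v hv) (fun v hv => hnotED e₂ he₂.1 he₂.2 v hv) heq)
      (fun e he hnein => map_edge_mem σ' (fun u v hu hv => hσ'adj u v hu hv) he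
        (hnotED e he hnein))
    obtain ⟨C, c, hc, hbd⟩ := hdecay μ hμ
    -- constants
    set k : ℕ := hE'fin.toFinset.card with hkdef
    have hkE' : E'.encard ≤ (k : ℕ∞) := le_of_eq hE'fin.encard_eq_coe_toFinset_card
    set mD : ℕ := EDf.card with hmDdef
    set K : ℕ := Ff.card with hKdef
    have hptop : p ≠ ⊤ := (lt_of_le_of_lt hp ENNReal.one_lt_top).ne
    have hRtop : p⁻¹ ^ mD ≠ ⊤ := ENNReal.pow_ne_top (ENNReal.inv_ne_top.2 hp0)
    set r : ℝ := (p⁻¹ ^ mD).toReal with hrdef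
    have hRr : (p⁻¹ ^ mD : ℝ≥0∞) = ENNReal.ofReal r := (ENNReal.ofReal_toReal hRtop).symm
    have hrpos : 0 ≤ r := ENNReal.toReal_nonneg
    set C₁ : ℝ := max C 0 with hC₁def
    have hC₁nn : 0 ≤ C₁ := le_max_right C 0
    refine ⟨(2 : ℝ) ^ K * (C₁ + r * (C₁ * Real.exp (c * k))), c, hc, ?_⟩
    intro x n hn
    -- transported coordinates
    set vval : ↥EIs → Sym2 V' := fun i => (↑i : Sym2 V') with hvval
    set ρ : ↥EIs → Sym2 V := fun i => Sym2.map σ ↑i with hρ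
    have hEIsub : ∀ i : ↥EIs, ∀ v ∈ (↑i : Sym2 V'), v ∉ E' := fun i => i.2.2
    have hvvalinj : Function.Injective vval := fun i j hij => Subtype.ext hij
    have hρinj : Function.Injective ρ := by
      intro i j hij
      exact Subtype.ext (map_edge_injOn σ hσinj ↑i ↑j (hEIsub i) (hEIsub j) hij)
    have hρrange : ∀ i : ↥EIs, ρ i ∈ G.edgeSet := fun i =>
      map_edge_mem σ (fun u v hu hv hadjuv => hσadj u v hu hv hadjuv) i.2.1 (hEIsub i)
    have hρnotED : ∀ i : ↥EIs, ρ i ∉ EDf := by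
      intro i hicon
      rw [hρ] at hicon
      simp only at hicon
      rw [hEDf, Set.Finite.mem_toFinset] at hicon
      obtain ⟨hedge, v, hv, hvE⟩ := hicon
      obtain ⟨u, hu, rfl⟩ := Sym2.mem_map.1 hv
      exact (hσEc u (hEIsub i u hu)) hvE
    set pp := fun (ω : Sym2 V' → Bool) (i : ↥EIs) => ω (vval i) with hpp
    set gg := fun (ω : Sym2 V → Bool) (i : ↥EIs) => ω (ρ i) with hgg
    have hppm : Measurable pp := measurable_pi_iff.2 fun i => measurable_pi_apply _
    have hggm : Measurable gg := measurable_pi_iff.2 fun i => measurable_pi_apply _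
    have hmapeq : Measure.map pp μ' = Measure.map gg μ :=
      bern_map_eq hμ' hμ vval ρ hvvalinj hρinj (fun i => i.2.1) hρrange
    have hmeq : ∀ S : Set (↥EIs → Bool), MeasurableSet S → μ' (pp ⁻¹' S) = μ (gg ⁻¹' S) := by
      intro S hS
      rw [← Measure.map_apply hppm hS, ← Measure.map_apply hggm hS, hmapeq]
    -- events
    set AA : Set (Sym2 V' → Bool) := {ω | (n : ℕ∞) < (cluster G' ω x).encard} with hAA
    set MM : Set (Sym2 V' → Bool) := {ω | ∃ d ∈ E', d ∈ cluster G' ω x} with hMM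
    have hAAm : MeasurableSet AA := measurableSet_cluster_gt G' x n
    have hMMm : MeasurableSet MM := by
      have hview : MM = ⋃ d ∈ hE'fin.toFinset, {ω : Sym2 V' → Bool | d ∈ cluster G' ω x} := by
        ext ω
        simp only [hMM, Set.mem_setOf_eq, Set.mem_iUnion, Set.Finite.mem_toFinset]
        constructor
        · rintro ⟨d, h1, h2⟩; exact ⟨d, h1, h2⟩
        · rintro ⟨d, h1, h2⟩; exact ⟨d, h1, h2⟩
      rw [hview]
      exact MeasurableSet.biUnion (hE'fin.toFinset).countable_toSet
        (fun d _ => measurableSet_mem_cluster G' x d)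
    set rb : (↥Ff → Bool) → (↥EIs → Bool) → Sym2 V' → Bool := fun b η e =>
      if h : e ∈ EIs then η ⟨e, h⟩ else if h2 : e ∈ Ff then b ⟨e, h2⟩ else true with hrb
    have hrbm : ∀ b, Measurable (rb b) := by
      intro b
      rw [measurable_pi_iff]
      intro e
      by_cases h : e ∈ EIs
      · simp only [hrb, dif_pos h]; exact measurable_pi_apply _
      · by_cases h2 : e ∈ Ff
        · simp only [hrb, dif_neg h, dif_pos h2]; exact measurable_const
        · simp only [hrb, dif_neg h, dif_neg h2]; exact measurable_const
    set S1 : (↥Ff → Bool) → Set (↥EIs → Bool) := fun b => rb b ⁻¹' (AA ∩ MMᶜ) with hS1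
    set S2 : (↥Ff → Bool) → Set (↥EIs → Bool) := fun b => rb b ⁻¹' (AA ∩ MM) with hS2
    have hS1m : ∀ b, MeasurableSet (S1 b) := fun b => hrbm b (hAAm.inter hMMm.compl)
    have hS2m : ∀ b, MeasurableSet (S2 b) := fun b => hrbm b (hAAm.inter hMMm)
    -- covering
    have hcover : AA ⊆ ⋃ b : ↥Ff → Bool, (AA ∩ {ω | ∀ i : ↥Ff, ω ↑i = b i}) := fun ω hω =>
      Set.mem_iUnion.2 ⟨fun i => ω ↑i, hω, fun i => rfl⟩
    have hstep1 : ∀ b : ↥Ff → Bool,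
        AA ∩ {ω | ∀ i : ↥Ff, ω ↑i = b i} ⊆ pp ⁻¹' (S1 b) ∪ pp ⁻¹' (S2 b) := by
      rintro b ω ⟨hA, hcyl⟩
      have hagree : ∀ e ∈ G'.edgeSet, rb b (pp ω) e = ω e := by
        intro e he
        by_cases h : e ∈ EIs
        · simp only [hrb, dif_pos h]
          try rfl
        · have h2 : e ∈ Ff := hedge_split e he h
          simp only [hrb, dif_neg h, dif_pos h2]
          exact (hcyl ⟨e, h2⟩).symm
      have hcleq : cluster G' (rb b (pp ω)) x = cluster G' ω x := cluster_congr hagree x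
      have hA' : rb b (pp ω) ∈ AA := by
        rw [hAA]
        show (n : ℕ∞) < (cluster G' (rb b (pp ω)) x).encard
        rw [hcleq]
        exact hA
      by_cases hM : ∃ d ∈ E', d ∈ cluster G' ω x
      · right
        show pp ω ∈ rb b ⁻¹' (AA ∩ MM)
        refine Set.mem_preimage.2 ⟨hA', ?_⟩
        rw [hMM]
        show ∃ d ∈ E', d ∈ cluster G' (rb b (pp ω)) x
        rw [hcleq]
        exact hM
      · left
        show pp ω ∈ rb b ⁻¹' (AA ∩ MMᶜ)
        refine Set.mem_preimage.2 ⟨hA', ?_⟩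
        intro hcon
        rw [hMM] at hcon
        have : ∃ d ∈ E', d ∈ cluster G' (rb b (pp ω)) x := hcon
        rw [hcleq] at this
        exact hM this
    -- the relation between transported configurations
    have hrelmain : ∀ (b : ↥Ff → Bool) (ω : Sym2 V → Bool) (u v : V'),
        u ∉ E' → v ∉ E' → G'.Adj u v → rb b (gg ω) s(u, v) = true →
          ω s(σ u, σ v) = true := by
      intro b ω u v hu hv hadjuv hopen'
      have hin : s(u, v) ∈ EIs := by
        refine ⟨(G'.mem_edgeSet).2 hadjuv, ?_⟩
        intro w hw
        rcases Sym2.mem_iff.1 hw with rfl | rfl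
        exacts [hu, hv]
      have h2 : rb b (gg ω) s(u, v) = ω s(σ u, σ v) := by
        simp only [hrb, dif_pos hin, hgg, hρ]
        rw [Sym2.map_pair_eq]
      rwa [h2] at hopen'
    -- bounds
    have hbound1 : ∀ b : ↥Ff → Bool,
        μ (gg ⁻¹' S1 b) ≤ ENNReal.ofReal (C₁ * Real.exp (-c * n)) := by
      intro b
      have hsub : gg ⁻¹' S1 b ⊆ {ω : Sym2 V → Bool | (n : ℕ∞) < (cluster G ω (σ x)).encard} := by
        intro ω hω
        have hω2 : rb b (gg ω) ∈ AA ∩ MMᶜ := hω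
        obtain ⟨hA, hMc⟩ := hω2
        refine cluster_transport_avoid σ hσinj hσadj (hrelmain b ω) hA ?_
        intro d hd hdC
        exact hMc ⟨d, hd, hdC⟩
      refine le_trans (measure_mono hsub) (le_trans (hbd (σ x) n) ?_)
      exact ENNReal.ofReal_le_ofReal
        (mul_le_mul_of_nonneg_right (le_max_left C 0) (Real.exp_nonneg _))
    have hbound2 : ∀ b : ↥Ff → Bool,
        μ (gg ⁻¹' S2 b ∩ {ω : Sym2 V → Bool | ∀ e ∈ EDf, ω e = true}) ≤
          ENNReal.ofReal (C₁ * Real.exp (c * k) * Real.exp (-c * n)) := by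
      intro b
      have hsub : gg ⁻¹' S2 b ∩ {ω : Sym2 V → Bool | ∀ e ∈ EDf, ω e = true} ⊆
          {ω : Sym2 V → Bool | ((n - k : ℕ) : ℕ∞) < (cluster G ω z).encard} := by
        rintro ω ⟨hω, hO⟩
        have hω2 : rb b (gg ω) ∈ AA ∩ MM := hω
        obtain ⟨hA, hM⟩ := hω2
        have hopenB : ∀ a bb : V, G.Adj a bb → (a ∈ E ∨ bb ∈ E) → ω s(a, bb) = true := by
          intro a bb hadjab hmem
          apply hO
          rw [hEDf, Set.Finite.mem_toFinset]
          refine ⟨(G.mem_edgeSet).2 hadjab, ?_⟩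
          rcases hmem with h | h
          · exact ⟨a, Sym2.mem_mk_left a bb, h⟩
          · exact ⟨bb, Sym2.mem_mk_right a bb, h⟩
        exact cluster_transport_meet ψ z σ hσeq hσinj hzE hP3 hP4 hσadj (hrelmain b ω)
          hopenB hkE' hA hM
      refine le_trans (measure_mono hsub) (le_trans (hbd z (n - k)) ?_)
      apply ENNReal.ofReal_le_ofReal
      have e1 : C * Real.exp (-c * ↑(n - k)) ≤ C₁ * Real.exp (-c * ↑(n - k)) :=
        mul_le_mul_of_nonneg_right (le_max_left C 0) (Real.exp_nonneg _)
      refine le_trans e1 ?_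
      rw [mul_assoc, ← Real.exp_add]
      apply mul_le_mul_of_nonneg_left ?_ hC₁nn
      apply Real.exp_le_exp.2
      have hcast : (↑n - ↑k : ℝ) ≤ (↑(n - k) : ℝ) := by
        rcases le_or_gt k n with h | h
        · rw [Nat.cast_sub h]
        · have h0 : n - k = 0 := by omega
          rw [h0]
          have : (n : ℝ) ≤ (k : ℝ) := by exact_mod_cast h.le
          simp only [Nat.cast_zero]
          linarith
      have h2 := mul_le_mul_of_nonneg_left hcast hc.le
      linarith
    -- independence
    have hcond : ∀ b : ↥Ff → Bool,
        μ (gg ⁻¹' S2 b ∩ {ω : Sym2 V → Bool | ∀ e ∈ EDf, ω e = true}) =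
          μ (gg ⁻¹' S2 b) * p ^ mD := by
      intro b
      have h := bern_cond_open hp hμ ρ hρinj hρrange EDf hEDsub hρnotED (hS2m b)
      rw [← hgg] at h
      exact h
    have hdiv : ∀ b : ↥Ff → Bool, μ (gg ⁻¹' S2 b) =
        p⁻¹ ^ mD * μ (gg ⁻¹' S2 b ∩ {ω : Sym2 V → Bool | ∀ e ∈ EDf, ω e = true}) := by
      intro b
      rw [hcond b, mul_comm (μ _) (p ^ mD), ← mul_assoc, ← mul_pow,
        ENNReal.inv_mul_cancel hp0 hptop, one_pow, one_mul]
    -- final chain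
    have hperb : ∀ b : ↥Ff → Bool, μ' (AA ∩ {ω | ∀ i : ↥Ff, ω ↑i = b i}) ≤
        ENNReal.ofReal ((C₁ + r * (C₁ * Real.exp (c * k))) * Real.exp (-c * n)) := by
      intro b
      refine le_trans (measure_mono (hstep1 b)) ?_
      refine le_trans (measure_union_le _ _) ?_
      rw [hmeq _ (hS1m b), hmeq _ (hS2m b)]
      have h2 : μ (gg ⁻¹' S2 b) ≤
          ENNReal.ofReal r * ENNReal.ofReal (C₁ * Real.exp (c * k) * Real.exp (-c * n)) := by
        rw [hdiv b, ← hRr]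
        exact mul_le_mul_right (hbound2 b) _
      refine le_trans (add_le_add (hbound1 b) h2) ?_
      rw [← ENNReal.ofReal_mul hrpos, ← ENNReal.ofReal_add (by positivity) (by positivity)]
      apply ENNReal.ofReal_le_ofReal
      apply le_of_eq
      ring
    calc μ' {ω | (n : ℕ∞) < (cluster G' ω x).encard}
        = μ' AA := by rw [hAA]
      _ ≤ μ' (⋃ b : ↥Ff → Bool, (AA ∩ {ω | ∀ i : ↥Ff, ω ↑i = b i})) := measure_mono hcover
      _ ≤ ∑' b : ↥Ff → Bool, μ' (AA ∩ {ω | ∀ i : ↥Ff, ω ↑i = b i}) := measure_iUnion_le _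
      _ ≤ ∑' _ : ↥Ff → Bool,
          ENNReal.ofReal ((C₁ + r * (C₁ * Real.exp (c * k))) * Real.exp (-c * n)) :=
            ENNReal.tsum_le_tsum hperb
      _ = (Fintype.card (↥Ff → Bool) : ℝ≥0∞) *
          ENNReal.ofReal ((C₁ + r * (C₁ * Real.exp (c * k))) * Real.exp (-c * n)) := by
            rw [tsum_fintype]
            simp [Finset.sum_const, nsmul_eq_mul]
      _ ≤ ENNReal.ofReal ((2 : ℝ) ^ K * (C₁ + r * (C₁ * Real.exp (c * k))) * Real.exp (-c * n)) := by
            have hcard : Fintype.card (↥Ff → Bool) = 2 ^ K := by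
              rw [Fintype.card_fun, Fintype.card_bool, Fintype.card_coe]
            rw [hcard]
            have hnatc : ((2 ^ K : ℕ) : ℝ≥0∞) = ENNReal.ofReal ((2 : ℝ) ^ K) := by
              rw [← ENNReal.ofReal_natCast (2 ^ K)]
              congr 1
              push_cast
              ring
            rw [hnatc, ← ENNReal.ofReal_mul (by positivity)]
            apply ENNReal.ofReal_le_ofReal
            apply le_of_eq
            ring


end PaperUnion
end
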